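/- arXiv:1410.5486 — 5 statements merged into one kernel-verified Lean document; each statement's English description precedes it below -/
import Mathlib

section
/- Let G be a connected multigraph with at least one edge and let k be a positive integer. Then G has at least k edge-disjoint spanning trees if and only if for every subset X of edges, |X| ≥ k(ω(G−X)−1), where ω denotes the number of connected components. -/
open Finset

/-- A finite multigraph: a finite vertex set, a finite set of edge names,
and an endpoint assignment sending each edge to an unordered pair of vertices. -/
structure MG (α β : Type) where
  verts : Finset α
  edges : Finset β
  ends : β → Sym2 α
  wf : ∀ e ∈ edges, ∀ v ∈ ends e, v ∈ verts

variable {α β : Type} [DecidableEq α] [DecidableEq β]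

namespace MG

def Adj (G : MG α β) (a b : α) : Prop := ∃ e ∈ G.edges, G.ends e = s(a, b)

def Reach (G : MG α β) : α → α → Prop := Relation.ReflTransGen G.Adj

def Connected (G : MG α β) : Prop :=
  G.verts.Nonempty ∧ ∀ a ∈ G.verts, ∀ b ∈ G.verts, G.Reach a b

/-- Number of connected components. -/
noncomputable def omega (G : MG α β) : ℕ :=
  ((fun v => {u | G.Reach v u}) '' (G.verts : Set α)).ncard

def deleteEdges (G : MG α β) (X : Finset β) : MG α β :=
  ⟨G.verts, G.edges \ X, G.ends, fun e he => G.wf e (Finset.mem_sdiff.mp he).1⟩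

def IsSubgraph (H G : MG α β) : Prop :=
  H.verts ⊆ G.verts ∧ H.edges ⊆ G.edges ∧ ∀ e ∈ H.edges, H.ends e = G.ends e

def IsSpanningTree (G T : MG α β) : Prop :=
  IsSubgraph T G ∧ T.verts = G.verts ∧ T.Connected ∧ T.edges.card = T.verts.card - 1

/-- `G` contains `m` pairwise edge-disjoint spanning trees. -/
def HasTrees (G : MG α β) (m : ℕ) : Prop :=
  ∃ T : Fin m → MG α β, (∀ i, IsSpanningTree G (T i)) ∧
    ∀ i j, i ≠ j → Disjoint (T i).edges (T j).edges

/-- Maximum number of pairwise edge-disjoint spanning trees. -/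
noncomputable def tau (G : MG α β) : ℕ := sSup {m | G.HasTrees m}

noncomputable def taubar (G : MG α β) : ℕ :=
  sSup {m | ∃ H : MG α β, IsSubgraph H G ∧ H.Connected ∧ tau H = m}

/-- Edge connectivity: the least size of an edge set whose deletion disconnects. -/
noncomputable def kappa (G : MG α β) : ℕ :=
  sInf {n | ∃ X ⊆ G.edges, X.card = n ∧ ¬ (G.deleteEdges X).Connected}

noncomputable def kappabar (G : MG α β) : ℕ :=
  sSup {n | ∃ H : MG α β, IsSubgraph H G ∧ kappa H = n}

/-- Density `|E(G)| / (|V(G)| - ω(G))`. -/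
noncomputable def dens (G : MG α β) : ℝ :=
  (G.edges.card : ℝ) / ((G.verts.card : ℝ) - (G.omega : ℝ))

/-- Maximum density over nontrivial subgraphs. -/
noncomputable def gamma (G : MG α β) : ℝ :=
  sSup {x : ℝ | ∃ H : MG α β, IsSubgraph H G ∧ H.edges.Nonempty ∧ dens H = x}

noncomputable def eta (G : MG α β) : ℝ :=
  sInf {x : ℝ | ∃ X : Finset β, X ⊆ G.edges ∧ G.omega < (G.deleteEdges X).omega ∧
    x = (X.card : ℝ) / (((G.deleteEdges X).omega : ℝ) - (G.omega : ℝ))}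

/-- A (minimal) edge cut. -/
def IsEdgeCut (G : MG α β) (X : Finset β) : Prop :=
  X ⊆ G.edges ∧ ¬ (G.deleteEdges X).Connected ∧
    ∀ Y : Finset β, Y ⊂ X → (G.deleteEdges Y).Connected

def addEdge (G : MG α β) (e : β) (a b : α) (ha : a ∈ G.verts) (hb : b ∈ G.verts) :
    MG α β :=
  ⟨G.verts, insert e G.edges, Function.update G.ends e s(a, b), by
    intro f hf v hv
    by_cases hfe : f = e
    · subst hfe
      rw [Function.update_self] at hv
      rcases Sym2.mem_iff.mp hv with h | h <;> subst h <;> assumption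
    · rw [Function.update_of_ne hfe] at hv
      exact G.wf f ((Finset.mem_insert.mp hf).resolve_left hfe) v hv⟩

/-- `G` is `k`-maximal: every subgraph has edge connectivity at most `k`, but adding
any new edge between two distinct vertices creates a subgraph of edge connectivity
at least `k+1`. -/
def IsKMaximal (k : ℕ) (G : MG α β) : Prop :=
  G.kappabar ≤ k ∧
    ∀ (e : β) (_ : e ∉ G.edges) (a b : α) (ha : a ∈ G.verts) (hb : b ∈ G.verts),
      a ≠ b → k + 1 ≤ (G.addEdge e a b ha hb).kappabar

def IsK1 (G : MG α β) : Prop := G.verts.card = 1 ∧ G.edges = ∅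

/-- `G` is the `k`-edge-join of `G₁` and `G₂`. -/
def IsEdgeJoin (G G₁ G₂ : MG α β) (k : ℕ) : Prop :=
  Disjoint G₁.verts G₂.verts ∧ IsSubgraph G₁ G ∧ IsSubgraph G₂ G ∧
  G.verts = G₁.verts ∪ G₂.verts ∧
  ∃ K : Finset β, K.card = k ∧ Disjoint K (G₁.edges ∪ G₂.edges) ∧
    G.edges = G₁.edges ∪ G₂.edges ∪ K ∧
    ∀ e ∈ K, ∃ a ∈ G₁.verts, ∃ b ∈ G₂.verts, G.ends e = s(a, b)

def UniformlyDense (G : MG α β) (k : ℕ) : Prop := dens G = k ∧ gamma G = k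

/-- Membership in `𝓕_{k,n}` : `κ' = τ = k`, `n` vertices, with `|E|` minimized. -/
def InFkn (G : MG α β) (k n : ℕ) : Prop :=
  kappa G = k ∧ tau G = k ∧ G.verts.card = n ∧
    ∀ H : MG α β, kappa H = k ∧ tau H = k ∧ H.verts.card = n →
      G.edges.card ≤ H.edges.card

def InFk (G : MG α β) (k : ℕ) : Prop := ∃ n, 1 < n ∧ InFkn G k n

end MG
set_option linter.unusedSectionVars false

namespace NW
variable {α β : Type} [DecidableEq α] [DecidableEq β]

def adj (ends : β → Sym2 α) (F : Finset β) (a b : α) : Prop := ∃ e ∈ F, ends e = s(a, b)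

def reach (ends : β → Sym2 α) (F : Finset β) : α → α → Prop :=
  Relation.ReflTransGen (adj ends F)

variable {ends : β → Sym2 α}

lemma adj_symm {F : Finset β} {a b : α} (h : adj ends F a b) : adj ends F b a := by
  obtain ⟨e, he, h⟩ := h; exact ⟨e, he, by rw [h, Sym2.eq_swap]⟩

lemma reach_refl (F : Finset β) (a : α) : reach ends F a a := Relation.ReflTransGen.refl

lemma reach_symm {F : Finset β} {a b : α} (h : reach ends F a b) : reach ends F b a :=
  by haveI : Std.Symm (adj ends F) := ⟨fun _ _ h => adj_symm h⟩; exact Std.Symm.symm (r := Relation.ReflTransGen (adj ends F)) _ _ h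

lemma reach_trans {F : Finset β} {a b c : α} (h : reach ends F a b) (h' : reach ends F b c) :
    reach ends F a c := Relation.ReflTransGen.trans h h'

lemma reach_of_adj {F : Finset β} {a b : α} (h : adj ends F a b) : reach ends F a b :=
  Relation.ReflTransGen.single h

lemma reach_mono {F F' : Finset β} (hFF : F ⊆ F') {a b : α} (h : reach ends F a b) :
    reach ends F' a b :=
  Relation.ReflTransGen.mono (r := adj ends F) (p := adj ends F') (fun x y (hxy : adj ends F x y) =>
    show adj ends F' x y from let ⟨e, he, hh⟩ := hxy; ⟨e, hFF he, hh⟩) a b h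

lemma reach_of_forall_adj {F F' : Finset β}
    (h : ∀ x y, adj ends F x y → reach ends F' x y) {a b : α}
    (hr : reach ends F a b) : reach ends F' a b := by
  induction hr with
  | refl => exact reach_refl _ _
  | tail _ hadj ih => exact reach_trans ih (h _ _ hadj)

/-- decomposition of reachability after inserting one edge -/
lemma reach_insert_iff {F : Finset β} {e : β} {u v : α} (he : ends e = s(u, v)) {x y : α} :
    reach ends (insert e F) x y ↔ reach ends F x y ∨
      (reach ends F x u ∧ reach ends F v y) ∨ (reach ends F x v ∧ reach ends F u y) := by
  constructor
  · intro h
    induction h with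
    | refl => exact Or.inl (reach_refl _ _)
    | @tail b c _ hadj ih =>
      obtain ⟨f, hf, hfe⟩ := hadj
      rcases Finset.mem_insert.mp hf with rfl | hfF
      · have h2 : s(u, v) = s(b, c) := he.symm.trans hfe
        rcases Sym2.eq_iff.mp h2 with ⟨rfl, rfl⟩ | ⟨rfl, rfl⟩
        · rcases ih with h | ⟨h1, h2⟩ | ⟨h1, h2⟩
          · exact Or.inr (Or.inl ⟨h, reach_refl _ _⟩)
          · exact Or.inr (Or.inl ⟨h1, reach_refl _ _⟩)
          · exact Or.inl h1
        · rcases ih with h | ⟨h1, h2⟩ | ⟨h1, h2⟩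
          · exact Or.inr (Or.inr ⟨h, reach_refl _ _⟩)
          · exact Or.inl h1
          · exact Or.inr (Or.inr ⟨h1, reach_refl _ _⟩)
      · have hb : reach ends F b c := reach_of_adj ⟨f, hfF, hfe⟩
        rcases ih with h | ⟨h1, h2⟩ | ⟨h1, h2⟩
        · exact Or.inl (reach_trans h hb)
        · exact Or.inr (Or.inl ⟨h1, reach_trans h2 hb⟩)
        · exact Or.inr (Or.inr ⟨h1, reach_trans h2 hb⟩)
  · have hsub : F ⊆ insert e F := Finset.subset_insert _ _
    have huv : reach ends (insert e F) u v :=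
      reach_of_adj ⟨e, Finset.mem_insert_self _ _, he⟩
    rintro (h | ⟨h1, h2⟩ | ⟨h1, h2⟩)
    · exact reach_mono hsub h
    · exact reach_trans (reach_mono hsub h1) (reach_trans huv (reach_mono hsub h2))
    · exact reach_trans (reach_mono hsub h1)
        (reach_trans (reach_symm huv) (reach_mono hsub h2))

lemma reach_insert_eq_of_reach {F : Finset β} {e : β} {u v : α} (he : ends e = s(u, v))
    (h : reach ends F u v) (x y : α) :
    reach ends (insert e F) x y ↔ reach ends F x y := by
  rw [reach_insert_iff he]
  constructor
  · rintro (h' | ⟨h1, h2⟩ | ⟨h1, h2⟩)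
    · exact h'
    · exact reach_trans h1 (reach_trans h h2)
    · exact reach_trans h1 (reach_trans (reach_symm h) h2)
  · exact Or.inl

lemma reach_empty_iff {x y : α} : reach ends (∅ : Finset β) x y ↔ x = y := by
  constructor
  · intro h
    induction h with
    | refl => rfl
    | tail _ hadj _ => exact absurd hadj.choose_spec.1 (Finset.notMem_empty _)
  · rintro rfl; exact reach_refl _ _


lemma sym2_exists (z : Sym2 α) : ∃ u v, z = s(u, v) := by
  induction z using Sym2.ind with | _ u v => exact ⟨u, v, rfl⟩

noncomputable def cl (V : Finset α) (ends : β → Sym2 α) (F : Finset β) (v : α) : Finset α :=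
  @Finset.filter _ (fun u => reach ends F v u) (Classical.decPred _) V

lemma mem_cl {V : Finset α} {F : Finset β} {v u : α} :
    u ∈ cl V ends F v ↔ u ∈ V ∧ reach ends F v u := by
  unfold cl; exact @Finset.mem_filter _ _ (Classical.decPred _) _ _

lemma mem_cl_self {V : Finset α} {F : Finset β} {v : α} (hv : v ∈ V) : v ∈ cl V ends F v :=
  mem_cl.mpr ⟨hv, reach_refl _ _⟩

lemma cl_eq_of_reach {V : Finset α} {F : Finset β} {v w : α} (h : reach ends F v w) :
    cl V ends F v = cl V ends F w := by
  ext u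
  simp only [mem_cl]
  exact and_congr_right fun _ =>
    ⟨fun h' => reach_trans (reach_symm h) h', fun h' => reach_trans h h'⟩

lemma reach_of_cl_eq {V : Finset α} {F : Finset β} {v w : α} (hw : w ∈ V)
    (h : cl V ends F v = cl V ends F w) : reach ends F v w :=
  (mem_cl.mp (h ▸ mem_cl_self hw)).2

noncomputable def ncomp (V : Finset α) (ends : β → Sym2 α) (F : Finset β) : ℕ :=
  (V.image (cl V ends F)).card

lemma ncomp_le_card (V : Finset α) (F : Finset β) : ncomp V ends F ≤ V.card :=
  Finset.card_image_le

lemma ncomp_pos {V : Finset α} (hV : V.Nonempty) (F : Finset β) : 0 < ncomp V ends F :=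
  Finset.card_pos.mpr (hV.image _)

lemma ncomp_congr {V : Finset α} {F F' : Finset β}
    (h : ∀ x y, reach ends F x y ↔ reach ends F' x y) : ncomp V ends F = ncomp V ends F' := by
  unfold ncomp
  congr 1
  apply Finset.image_congr
  intro v _
  ext u
  simp only [mem_cl, h]

lemma ncomp_eq_one_iff {V : Finset α} (hV : V.Nonempty) {F : Finset β} :
    ncomp V ends F = 1 ↔ ∀ a ∈ V, ∀ b ∈ V, reach ends F a b := by
  constructor
  · intro h a ha b hb
    obtain ⟨t, ht⟩ := Finset.card_eq_one.mp h
    have h1 : cl V ends F a = t := by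
      have := Finset.mem_image_of_mem (cl V ends F) ha
      rw [ht, Finset.mem_singleton] at this; exact this
    have h2 : cl V ends F b = t := by
      have := Finset.mem_image_of_mem (cl V ends F) hb
      rw [ht, Finset.mem_singleton] at this; exact this
    exact reach_of_cl_eq hb (h1.trans h2.symm)
  · intro h
    obtain ⟨v₀, hv₀⟩ := hV
    have : V.image (cl V ends F) = {cl V ends F v₀} := by
      apply Finset.eq_singleton_iff_nonempty_unique_mem.mpr
      refine ⟨⟨_, Finset.mem_image_of_mem _ hv₀⟩, ?_⟩
      intro t ht
      obtain ⟨a, ha, rfl⟩ := Finset.mem_image.mp ht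
      exact cl_eq_of_reach (reach_symm (h v₀ hv₀ a ha))
    rw [ncomp, this, Finset.card_singleton]

/-- canonical merge map between component sets -/
noncomputable def clm (V : Finset α) (ends : β → Sym2 α) (F' : Finset β) (s : Finset α) :
    Finset α :=
  @Finset.filter _ (fun u => ∃ w ∈ s, reach ends F' w u) (Classical.decPred _) V

lemma mem_clm {V : Finset α} {F' : Finset β} {s : Finset α} {u : α} :
    u ∈ clm V ends F' s ↔ u ∈ V ∧ ∃ w ∈ s, reach ends F' w u := by
  unfold clm; exact @Finset.mem_filter _ _ (Classical.decPred _) _ _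

lemma clm_cl {V : Finset α} {F F' : Finset β} (hFF : F ⊆ F') {v : α} (hv : v ∈ V) :
    clm V ends F' (cl V ends F v) = cl V ends F' v := by
  ext u
  rw [mem_clm, mem_cl]
  constructor
  · rintro ⟨hu, w, hw, hwu⟩
    exact ⟨hu, reach_trans (reach_mono hFF (mem_cl.mp hw).2) hwu⟩
  · rintro ⟨hu, hr⟩
    exact ⟨hu, v, mem_cl_self hv, hr⟩

lemma ncomp_le_of_subset {V : Finset α} {F F' : Finset β} (hFF : F ⊆ F') :
    ncomp V ends F' ≤ ncomp V ends F := by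
  apply Finset.card_le_card_of_surjOn (clm V ends F')
  intro t ht
  obtain ⟨v, hv, rfl⟩ := Finset.mem_coe.mp (by exact_mod_cast ht : t ∈ V.image (cl V ends F'))
    |> fun h => Finset.mem_image.mp h
  exact ⟨cl V ends F v, Finset.mem_coe.mpr (Finset.mem_image_of_mem _ hv), clm_cl hFF hv⟩

lemma ncomp_insert_of_not_reach {V : Finset α} {F : Finset β} {e : β} {u v : α}
    (he : ends e = s(u, v)) (hu : u ∈ V) (hv : v ∈ V) (h : ¬ reach ends F u v) :
    ncomp V ends (insert e F) + 1 = ncomp V ends F := by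
  classical
  set T := insert e F with hT
  have hsub : F ⊆ T := Finset.subset_insert _ _
  set m := clm V ends T with hm
  set A := V.image (cl V ends F) with hA
  set B := V.image (cl V ends T) with hB
  have hmB : ∀ w ∈ V, m (cl V ends F w) = cl V ends T w := fun w hw => clm_cl hsub hw
  have hcluv : cl V ends F u ≠ cl V ends F v := fun hh => h (reach_of_cl_eq hv hh)
  have hclTuv : cl V ends T u = cl V ends T v :=
    cl_eq_of_reach (reach_of_adj ⟨e, Finset.mem_insert_self _ _, he⟩)
  have hBeq : B = (A.erase (cl V ends F u)).image m := by
    ext t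
    constructor
    · intro ht
      obtain ⟨w, hw, rfl⟩ := Finset.mem_image.mp ht
      by_cases hcase : cl V ends F w = cl V ends F u
      · refine Finset.mem_image.mpr ⟨cl V ends F v, Finset.mem_erase.mpr
          ⟨fun hh => hcluv hh.symm, Finset.mem_image_of_mem _ hv⟩, ?_⟩
        have hwu : reach ends F w u := reach_of_cl_eq hu hcase
        have : cl V ends T w = cl V ends T u := cl_eq_of_reach (reach_mono hsub hwu)
        rw [hmB v hv, ← hclTuv, ← this]
      · exact Finset.mem_image.mpr ⟨cl V ends F w,
          Finset.mem_erase.mpr ⟨hcase, Finset.mem_image_of_mem _ hw⟩, hmB w hw⟩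
    · intro ht
      obtain ⟨s, hs, rfl⟩ := Finset.mem_image.mp ht
      obtain ⟨w, hw, rfl⟩ := Finset.mem_image.mp (Finset.mem_of_mem_erase hs)
      rw [hmB w hw]; exact Finset.mem_image_of_mem _ hw
  have hinj : Set.InjOn m ↑(A.erase (cl V ends F u)) := by
    intro s1 hs1 s2 hs2 hss
    have hs1' := Finset.mem_coe.mp hs1
    have hs2' := Finset.mem_coe.mp hs2
    obtain ⟨w1, hw1, rfl⟩ := Finset.mem_image.mp (Finset.mem_of_mem_erase hs1')
    obtain ⟨w2, hw2, rfl⟩ := Finset.mem_image.mp (Finset.mem_of_mem_erase hs2')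
    have hne1 : cl V ends F w1 ≠ cl V ends F u := Finset.ne_of_mem_erase hs1'
    have hne2 : cl V ends F w2 ≠ cl V ends F u := Finset.ne_of_mem_erase hs2'
    rw [hmB w1 hw1, hmB w2 hw2] at hss
    have hr : reach ends T w1 w2 := reach_of_cl_eq hw2 hss
    rcases (reach_insert_iff he).mp hr with h' | ⟨h1, h2⟩ | ⟨h1, h2⟩
    · exact cl_eq_of_reach h'
    · exact absurd (cl_eq_of_reach h1) hne1
    · exact absurd (cl_eq_of_reach h2).symm hne2
  have hcard : B.card = (A.erase (cl V ends F u)).card := by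
    rw [hBeq]; exact Finset.card_image_of_injOn hinj
  have hmemA : cl V ends F u ∈ A := Finset.mem_image_of_mem _ hu
  have hApos : 1 ≤ ncomp V ends F := ncomp_pos ⟨u, hu⟩ F
  have : ncomp V ends T = ncomp V ends F - 1 := by
    show B.card = A.card - 1
    rw [hcard, Finset.card_erase_of_mem hmemA]
  show ncomp V ends T + 1 = ncomp V ends F
  rw [this]
  omega

lemma ncomp_le_insert_add_one {V : Finset α} {F : Finset β} {e : β}
    (hwfe : ∀ w ∈ ends e, w ∈ V) :
    ncomp V ends F ≤ ncomp V ends (insert e F) + 1 := by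
  obtain ⟨u, v, he⟩ := sym2_exists (ends e)
  have hu : u ∈ V := hwfe u (by rw [he]; exact Sym2.mem_mk_left _ _)
  have hv : v ∈ V := hwfe v (by rw [he]; exact Sym2.mem_mk_right _ _)
  by_cases h : reach ends F u v
  · rw [ncomp_congr (fun x y => (reach_insert_eq_of_reach he h x y).symm)]
    omega
  · rw [← ncomp_insert_of_not_reach he hu hv h]

lemma card_add_ncomp_le {V : Finset α} {F : Finset β}
    (hwf : ∀ e ∈ F, ∀ w ∈ ends e, w ∈ V) :
    V.card ≤ F.card + ncomp V ends F := by
  classical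
  induction F using Finset.induction_on with
  | empty =>
    have : ncomp V ends (∅ : Finset β) = V.card := by
      have hcl : ∀ v ∈ V, cl V ends (∅ : Finset β) v = {v} := by
        intro v hv
        ext u
        rw [mem_cl, Finset.mem_singleton]
        constructor
        · rintro ⟨_, hr⟩; exact (reach_empty_iff.mp hr).symm
        · rintro rfl; exact ⟨hv, reach_refl _ _⟩
      rw [ncomp]
      rw [Finset.image_congr (fun v hv => hcl v hv)]
      rw [Finset.card_image_of_injOn (fun x _ y _ hxy => Finset.singleton_injective hxy)]
    omega
  | @insert a s ha ih =>
    have hwfs : ∀ e ∈ s, ∀ w ∈ ends e, w ∈ V := fun e hes => hwf e (Finset.mem_insert_of_mem hes)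
    have h1 := ih hwfs
    have h2 : ncomp V ends s ≤ ncomp V ends (insert a s) + 1 :=
      ncomp_le_insert_add_one (hwf a (Finset.mem_insert_self _ _))
    rw [Finset.card_insert_of_notMem ha]
    omega

lemma ncomp_le_union_add_card {V : Finset α} {F D : Finset β}
    (hwf : ∀ e ∈ D, ∀ w ∈ ends e, w ∈ V) :
    ncomp V ends F ≤ ncomp V ends (F ∪ D) + D.card := by
  classical
  induction D using Finset.induction_on with
  | empty => simp
  | @insert a s ha ih =>
    have hwfs : ∀ e ∈ s, ∀ w ∈ ends e, w ∈ V := fun e hes => hwf e (Finset.mem_insert_of_mem hes)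
    have h1 := ih hwfs
    have h2 : ncomp V ends (F ∪ s) ≤ ncomp V ends (insert a (F ∪ s)) + 1 :=
      ncomp_le_insert_add_one (hwf a (Finset.mem_insert_self _ _))
    have h3 : insert a (F ∪ s) = F ∪ insert a s := (Finset.union_insert _ _ _).symm
    rw [Finset.card_insert_of_notMem ha]
    rw [h3] at h2
    omega

lemma ncomp_le_of_superset_card {V : Finset α} {S T : Finset β} (hST : S ⊆ T)
    (hwf : ∀ e ∈ T, ∀ w ∈ ends e, w ∈ V) :
    ncomp V ends S ≤ ncomp V ends T + (T \ S).card := by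
  have h1 : ncomp V ends S ≤ ncomp V ends (S ∪ (T \ S)) + (T \ S).card :=
    ncomp_le_union_add_card (fun e he => hwf e (Finset.mem_sdiff.mp he).1)
  rwa [Finset.union_sdiff_of_subset hST] at h1

lemma reach_mem {V : Finset α} {F : Finset β} (hwf : ∀ e ∈ F, ∀ w ∈ ends e, w ∈ V)
    {v u : α} (hv : v ∈ V) (h : reach ends F v u) : u ∈ V := by
  induction h with
  | refl => exact hv
  | tail _ hadj ih =>
    obtain ⟨f, hf, hfe⟩ := hadj
    exact hwf f hf _ (by rw [hfe]; exact Sym2.mem_mk_right _ _)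

def IsForest (V : Finset α) (ends : β → Sym2 α) (F : Finset β) : Prop :=
  F.card + ncomp V ends F = V.card

lemma ncomp_empty (V : Finset α) : ncomp V ends (∅ : Finset β) = V.card := by
  have hcl : ∀ v ∈ V, cl V ends (∅ : Finset β) v = {v} := by
    intro v hv
    ext u
    rw [mem_cl, Finset.mem_singleton]
    constructor
    · rintro ⟨_, hr⟩; exact (reach_empty_iff.mp hr).symm
    · rintro rfl; exact ⟨hv, reach_refl _ _⟩
  rw [ncomp, Finset.image_congr (fun v hv => hcl v hv),
    Finset.card_image_of_injOn (fun x _ y _ hxy => Finset.singleton_injective hxy)]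

lemma isForest_empty (V : Finset α) : IsForest V ends (∅ : Finset β) := by
  unfold IsForest; rw [ncomp_empty]; simp

lemma IsForest.subset {V : Finset α} {S T : Finset β} (hT : IsForest V ends T) (hST : S ⊆ T)
    (hwf : ∀ e ∈ T, ∀ w ∈ ends e, w ∈ V) : IsForest V ends S := by
  have h1 := card_add_ncomp_le (V := V) (F := S) (fun e he => hwf e (hST he))
  have h2 := ncomp_le_of_superset_card hST hwf
  have h3 : (T \ S).card + S.card = T.card := Finset.card_sdiff_add_card_eq_card hST
  unfold IsForest at *
  omega

lemma IsForest.bridge {V : Finset α} {F : Finset β} (hF : IsForest V ends F)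
    (hwf : ∀ e ∈ F, ∀ w ∈ ends e, w ∈ V) {e : β} (he : e ∈ F) {u v : α}
    (hends : ends e = s(u, v)) : ¬ reach ends (F.erase e) u v := by
  intro hr
  have hins : insert e (F.erase e) = F := Finset.insert_erase he
  have hiff : ∀ x y, reach ends F x y ↔ reach ends (F.erase e) x y := by
    intro x y
    have h := reach_insert_eq_of_reach hends hr x y
    rwa [hins] at h
  have hnc : ncomp V ends F = ncomp V ends (F.erase e) := ncomp_congr hiff
  have h1 := card_add_ncomp_le (V := V) (F := F.erase e)
    (fun e' he' => hwf e' (Finset.erase_subset _ _ he'))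
  have hcard : (F.erase e).card = F.card - 1 := Finset.card_erase_of_mem he
  have hpos : 1 ≤ F.card := Finset.card_pos.mpr ⟨e, he⟩
  unfold IsForest at hF
  omega

lemma isForest_insert {V : Finset α} {F : Finset β} (hF : IsForest V ends F) {e : β} {u v : α}
    (hends : ends e = s(u, v)) (hu : u ∈ V) (hv : v ∈ V) (h : ¬ reach ends F u v) :
    IsForest V ends (insert e F) := by
  have heF : e ∉ F := fun heF => h (reach_of_adj ⟨e, heF, hends⟩)
  have hdec := ncomp_insert_of_not_reach hends hu hv h
  unfold IsForest at *
  rw [Finset.card_insert_of_notMem heF]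
  omega

lemma reach_swap {S : Finset β} {e e' : β} {u v : α} (he : ends e = s(u, v))
    (hS : reach ends S u v) (hS' : ¬ reach ends (S.erase e') u v) (he' : e' ∈ S) :
    ∀ x y, reach ends (insert e (S.erase e')) x y ↔ reach ends S x y := by
  intro x y
  constructor
  · apply reach_of_forall_adj
    rintro x' y' ⟨f, hf, hfe⟩
    rcases Finset.mem_insert.mp hf with rfl | hf'
    · rcases Sym2.eq_iff.mp (he.symm.trans hfe) with ⟨rfl, rfl⟩ | ⟨rfl, rfl⟩
      · exact hS
      · exact reach_symm hS
    · exact reach_of_adj ⟨f, Finset.erase_subset _ _ hf', hfe⟩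
  · apply reach_of_forall_adj
    rintro x' y' ⟨f, hf, hfe⟩
    by_cases hfe' : f = e'
    · subst hfe'
      have hins : insert f (S.erase f) = S := Finset.insert_erase he'
      have hdec := (reach_insert_iff hfe).mp (by rw [hins]; exact hS)
      have hsub : S.erase f ⊆ insert e (S.erase f) := Finset.subset_insert _ _
      have hadj : reach ends (insert e (S.erase f)) u v :=
        reach_of_adj ⟨e, Finset.mem_insert_self _ _, he⟩
      rcases hdec with h' | ⟨h1, h2⟩ | ⟨h1, h2⟩
      · exact absurd h' hS'
      · exact reach_trans (reach_symm (reach_mono hsub h1))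
          (reach_trans hadj (reach_symm (reach_mono hsub h2)))
      · exact reach_trans (reach_mono hsub h2)
          (reach_trans (reach_symm hadj) (reach_mono hsub h1))
    · exact reach_of_adj ⟨f, Finset.mem_insert_of_mem (Finset.mem_erase.mpr ⟨hfe', hf⟩), hfe⟩

lemma exists_minimal_connecting {S : Finset β} {u v : α} (h : reach ends S u v) :
    ∃ P ⊆ S, reach ends P u v ∧ ∀ e ∈ P, ¬ reach ends (P.erase e) u v := by
  classical
  let Ps := S.powerset.filter (fun P => reach ends P u v)
  have hne : Ps.Nonempty := ⟨S, Finset.mem_filter.mpr ⟨Finset.mem_powerset_self _, h⟩⟩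
  obtain ⟨P, hP, hmin⟩ := Finset.exists_min_image Ps Finset.card hne
  obtain ⟨hPS, hPr⟩ := Finset.mem_filter.mp hP
  refine ⟨P, Finset.mem_powerset.mp hPS, hPr, ?_⟩
  intro e heP hre
  have hP' : P.erase e ∈ Ps := Finset.mem_filter.mpr
    ⟨Finset.mem_powerset.mpr ((Finset.erase_subset _ _).trans (Finset.mem_powerset.mp hPS)), hre⟩
  have hle := hmin _ hP'
  have hlt : (P.erase e).card < P.card := Finset.card_erase_lt_of_mem heP
  omega

lemma bridge_of_minimal {V : Finset α} {F P : Finset β} (hF : IsForest V ends F)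
    (hwf : ∀ e ∈ F, ∀ w ∈ ends e, w ∈ V) (hPF : P ⊆ F) {u v : α}
    (hPr : reach ends P u v) {e : β} (heP : e ∈ P)
    (hmin : ¬ reach ends (P.erase e) u v) : ¬ reach ends (F.erase e) u v := by
  intro hcon
  obtain ⟨p, q, hpq⟩ := sym2_exists (ends e)
  have hbr : ¬ reach ends (F.erase e) p q := hF.bridge hwf (hPF heP) hpq
  have hins : insert e (P.erase e) = P := Finset.insert_erase heP
  have hdec := (reach_insert_iff hpq).mp (by rw [hins]; exact hPr)
  have hsub : P.erase e ⊆ F.erase e := fun f hf => Finset.mem_erase.mpr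
    ⟨(Finset.mem_erase.mp hf).1, hPF (Finset.mem_erase.mp hf).2⟩
  rcases hdec with h' | ⟨h1, h2⟩ | ⟨h1, h2⟩
  · exact hmin h'
  · exact hbr (reach_trans (reach_symm (reach_mono hsub h1))
      (reach_trans hcon (reach_symm (reach_mono hsub h2))))
  · exact hbr (reach_trans (reach_mono hsub h2)
      (reach_trans (reach_symm hcon) (reach_mono hsub h1)))

section Main

variable (V : Finset α) (ends : β → Sym2 α) (E : Finset β) (k : ℕ)

def Valid (F : Fin k → Finset β) : Prop :=
  (∀ i, F i ⊆ E) ∧ (∀ i, IsForest V ends (F i)) ∧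
    ∀ i j, i ≠ j → Disjoint (F i) (F j)

def total (F : Fin k → Finset β) : ℕ := ∑ i, (F i).card

inductive Reachable (F0 : Fin k → Finset β) : (Fin k → Finset β) → Prop
  | refl : Reachable F0 F0
  | step {F : Fin k → Finset β} {i : Fin k} {e e' : β} {u v : α} :
      Reachable F0 F → e ∈ E → (∀ j, e ∉ F j) → e' ∈ F i →
      ends e = s(u, v) → reach ends (F i) u v → ¬ reach ends ((F i).erase e') u v →
      Reachable F0 (Function.update F i (insert e ((F i).erase e')))

variable {V ends E k}

lemma reachable_valid {F0 F : Fin k → Finset β} (hv : Valid V ends E k F0)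
    (h : Reachable ends E k F0 F) : Valid V ends E k F ∧ total k F = total k F0 := by
  induction h with
  | refl => exact ⟨hv, rfl⟩
  | @step F i e e' u v hre he hunused he' hends hr hnr ih =>
    obtain ⟨⟨hsub, hfor, hdis⟩, htot⟩ := ih
    have hFicard : 1 ≤ (F i).card := Finset.card_pos.mpr ⟨e', he'⟩
    have heFi : e ∉ (F i).erase e' := fun hmem => hunused i (Finset.erase_subset _ _ hmem)
    have hFi'card : (insert e ((F i).erase e')).card = (F i).card := by
      rw [Finset.card_insert_of_notMem heFi, Finset.card_erase_of_mem he']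
      omega
    have hreq := reach_swap hends hr hnr he'
    refine ⟨⟨?_, ?_, ?_⟩, ?_⟩
    · intro j
      by_cases hij : j = i
      · subst hij
        rw [Function.update_self]
        intro f hf
        rcases Finset.mem_insert.mp hf with rfl | hf'
        · exact he
        · exact hsub j (Finset.erase_subset _ _ hf')
      · rw [Function.update_of_ne hij]; exact hsub j
    · intro j
      by_cases hij : j = i
      · subst hij
        rw [Function.update_self]
        unfold IsForest at *
        rw [hFi'card, ncomp_congr hreq]
        exact hfor j
      · rw [Function.update_of_ne hij]; exact hfor j
    · intro j j' hjj'
      have key : ∀ j'', j'' ≠ i → Disjoint (insert e ((F i).erase e')) (F j'') := by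
        intro j'' hj''
        rw [Finset.disjoint_left]
        intro f hf
        rcases Finset.mem_insert.mp hf with rfl | hf'
        · exact hunused j''
        · exact Finset.disjoint_left.mp (hdis i j'' (fun hh => hj'' hh.symm))
            (Finset.erase_subset _ _ hf')
      by_cases hj : j = i <;> by_cases hj' : j' = i
      · exact absurd (hj.trans hj'.symm) hjj'
      · subst hj
        rw [Function.update_self, Function.update_of_ne hj']
        exact key j' hj'
      · subst hj'
        rw [Function.update_self, Function.update_of_ne hj]
        exact (key j hj).symm
      · rw [Function.update_of_ne hj, Function.update_of_ne hj']
        exact hdis j j' hjj'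
    · rw [← htot]
      apply Finset.sum_congr rfl
      intro j _
      by_cases hij : j = i
      · subst hij; rw [Function.update_self, hFi'card]
      · rw [Function.update_of_ne hij]

lemma valid_augment {F : Fin k → Finset β}
    (hwf : ∀ e ∈ E, ∀ w ∈ ends e, w ∈ V)
    (hv : Valid V ends E k F) {e : β} {i : Fin k} {u v : α}
    (he : e ∈ E) (hunused : ∀ j, e ∉ F j) (hends : ends e = s(u, v))
    (hnr : ¬ reach ends (F i) u v) :
    Valid V ends E k (Function.update F i (insert e (F i))) ∧
      total k (Function.update F i (insert e (F i))) = total k F + 1 := by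
  obtain ⟨hsub, hfor, hdis⟩ := hv
  have hu : u ∈ V := hwf e he u (by rw [hends]; exact Sym2.mem_mk_left _ _)
  have hv' : v ∈ V := hwf e he v (by rw [hends]; exact Sym2.mem_mk_right _ _)
  refine ⟨⟨?_, ?_, ?_⟩, ?_⟩
  · intro j
    by_cases hij : j = i
    · subst hij
      rw [Function.update_self]
      intro f hf
      rcases Finset.mem_insert.mp hf with rfl | hf'
      · exact he
      · exact hsub j hf'
    · rw [Function.update_of_ne hij]; exact hsub j
  · intro j
    by_cases hij : j = i
    · subst hij
      rw [Function.update_self]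
      exact isForest_insert (hfor j) hends hu hv' hnr
    · rw [Function.update_of_ne hij]; exact hfor j
  · intro j j' hjj'
    have key : ∀ j'', j'' ≠ i → Disjoint (insert e (F i)) (F j'') := by
      intro j'' hj''
      rw [Finset.disjoint_left]
      intro f hf
      rcases Finset.mem_insert.mp hf with rfl | hf'
      · exact hunused j''
      · exact Finset.disjoint_left.mp (hdis i j'' (fun hh => hj'' hh.symm)) hf'
    by_cases hj : j = i <;> by_cases hj' : j' = i
    · exact absurd (hj.trans hj'.symm) hjj'
    · subst hj
      rw [Function.update_self, Function.update_of_ne hj']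
      exact key j' hj'
    · subst hj'
      rw [Function.update_self, Function.update_of_ne hj]
      exact (key j hj).symm
    · rw [Function.update_of_ne hj, Function.update_of_ne hj']
      exact hdis j j' hjj'
  · have h1 : ∑ j, (Function.update F i (insert e (F i)) j).card
        = (insert e (F i)).card + ∑ j ∈ Finset.univ.erase i, (F j).card := by
      rw [← Finset.add_sum_erase _ _ (Finset.mem_univ i), Function.update_self]
      congr 1
      apply Finset.sum_congr rfl
      intro j hj
      rw [Function.update_of_ne (Finset.mem_erase.mp hj).1]
    have h2 : ∑ j ∈ Finset.univ.erase i, (F j).card + (F i).card = ∑ j, (F j).card :=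
      Finset.sum_erase_add _ _ (Finset.mem_univ i)
    have h3 : (insert e (F i)).card = (F i).card + 1 :=
      Finset.card_insert_of_notMem (hunused i)
    unfold total
    omega

theorem main_packing (V : Finset α) (ends : β → Sym2 α) (E : Finset β)
    (hwf : ∀ e ∈ E, ∀ w ∈ ends e, w ∈ V) (hV : V.Nonempty) (k : ℕ)
    (hcut : ∀ X ⊆ E, k * (ncomp V ends (E \ X) - 1) ≤ X.card) :
    ∃ F : Fin k → Finset β, (∀ i, F i ⊆ E) ∧ (∀ i, ncomp V ends (F i) = 1) ∧
      (∀ i, (F i).card + 1 = V.card) ∧ (∀ i j, i ≠ j → Disjoint (F i) (F j)) := by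
  classical
  set n := V.card with hn
  have hn1 : 1 ≤ n := Finset.card_pos.mpr hV
  set TS : Set ℕ := {m | ∃ F, Valid V ends E k F ∧ total k F = m} with hTS
  have hTne : (0 : ℕ) ∈ TS :=
    ⟨fun _ => ∅, ⟨fun _ => Finset.empty_subset _, fun _ => isForest_empty V,
      fun _ _ _ => Finset.disjoint_empty_left _⟩, by simp [total]⟩
  have hTbdd : BddAbove TS := by
    refine ⟨k * E.card, ?_⟩
    rintro m ⟨F, ⟨hsub, _, _⟩, rfl⟩
    calc total k F = ∑ i, (F i).card := rfl
    _ ≤ ∑ _i : Fin k, E.card := Finset.sum_le_sum (fun i _ => Finset.card_le_card (hsub i))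
    _ = k * E.card := by simp [Finset.sum_const, mul_comm]
  set M := sSup TS with hMdef
  obtain ⟨F0, hF0v, hF0tot⟩ := Nat.sSup_mem ⟨0, hTne⟩ hTbdd
  have hmax : ∀ F, Valid V ends E k F → total k F ≤ M :=
    fun F hF => le_csSup hTbdd ⟨F, hF, rfl⟩
  set R := E.filter (fun e => ∃ F, Reachable ends E k F0 F ∧ ∀ j, e ∉ F j) with hRdef
  have hRE : R ⊆ E := Finset.filter_subset _ _
  have haug : ∀ F, Reachable ends E k F0 F → ∀ e ∈ E, (∀ j, e ∉ F j) →
      ∀ (i : Fin k) (u v : α), ends e = s(u, v) → reach ends (F i) u v := by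
    intro F hre e he hun i u v hends
    by_contra hnr
    obtain ⟨hFv, hFtot⟩ := reachable_valid hF0v hre
    obtain ⟨hv', htot'⟩ := valid_augment hwf hFv he hun hends hnr
    have hle := hmax _ hv'
    omega
  have hwfF : ∀ F, Valid V ends E k F → ∀ (i : Fin k), ∀ e ∈ F i, ∀ w ∈ ends e, w ∈ V :=
    fun F hF i e he => hwf e (hF.1 i he)
  have hPR : ∀ F, Reachable ends E k F0 F → ∀ e ∈ E, (∀ j, e ∉ F j) →
      ∀ (i : Fin k) (u v : α), ends e = s(u, v) → reach ends (F i ∩ R) u v := by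
    intro F hre e he hun i u v hends
    obtain ⟨hFv, hFtot⟩ := reachable_valid hF0v hre
    have hr := haug F hre e he hun i u v hends
    obtain ⟨P, hPF, hPr, hPmin⟩ := exists_minimal_connecting hr
    have hPsubR : P ⊆ F i ∩ R := by
      intro f hf
      refine Finset.mem_inter.mpr ⟨hPF hf, ?_⟩
      have hbr : ¬ reach ends ((F i).erase f) u v :=
        bridge_of_minimal (hFv.2.1 i) (hwfF F hFv i) hPF hPr hf (hPmin f hf)
      have hstep := Reachable.step hre he hun (hPF hf) hends hr hbr
      refine Finset.mem_filter.mpr ⟨hFv.1 i (hPF hf), _, hstep, ?_⟩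
      intro j
      by_cases hij : j = i
      · subst hij
        rw [Function.update_self]
        intro hmem
        rcases Finset.mem_insert.mp hmem with hfe | hmem'
        · exact hun j (hfe ▸ hPF hf)
        · exact (Finset.mem_erase.mp hmem').1 rfl
      · rw [Function.update_of_ne hij]
        exact Finset.disjoint_left.mp (hFv.2.2 i j (fun hh => hij hh.symm)) (hPF hf)
    exact reach_mono hPsubR hPr
  have hinv : ∀ F, Reachable ends E k F0 F →
      ∀ (i : Fin k) (x y : α), reach ends (F i ∩ R) x y ↔ reach ends (F0 i ∩ R) x y := by
    intro F hre
    induction hre with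
    | refl => intro i x y; exact Iff.rfl
    | @step F i e e' u v hre' he hun he' hends hr hnr ih =>
      obtain ⟨hFv, _⟩ := reachable_valid hF0v hre'
      intro j x y
      by_cases hij : j = i
      · subst hij
        rw [Function.update_self]
        have heR : e ∈ R := Finset.mem_filter.mpr ⟨he, F, hre', hun⟩
        have he'R : e' ∈ R := by
          refine Finset.mem_filter.mpr ⟨hFv.1 j he', _,
            Reachable.step hre' he hun he' hends hr hnr, ?_⟩
          intro j'
          by_cases hij' : j' = j
          · subst hij'
            rw [Function.update_self]
            intro hmem
            rcases Finset.mem_insert.mp hmem with hfe | hmem'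
            · exact hun j' (hfe ▸ he')
            · exact (Finset.mem_erase.mp hmem').1 rfl
          · rw [Function.update_of_ne hij']
            exact Finset.disjoint_left.mp (hFv.2.2 j j' (fun hh => hij' hh.symm)) he'
        have hseteq : insert e ((F j).erase e') ∩ R = insert e ((F j ∩ R).erase e') := by
          ext f
          simp only [Finset.mem_inter, Finset.mem_insert, Finset.mem_erase]
          constructor
          · rintro ⟨rfl | ⟨hne, hmem⟩, hfR⟩
            · exact Or.inl rfl
            · exact Or.inr ⟨hne, hmem, hfR⟩
          · rintro (rfl | ⟨hne, hmem, hfR⟩)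
            · exact ⟨Or.inl rfl, heR⟩
            · exact ⟨Or.inr ⟨hne, hmem⟩, hfR⟩
        rw [hseteq]
        have hnrR : ¬ reach ends ((F j ∩ R).erase e') u v := fun hcon => hnr
          (reach_mono (fun f hf => Finset.mem_erase.mpr ⟨(Finset.mem_erase.mp hf).1,
            (Finset.mem_inter.mp (Finset.mem_erase.mp hf).2).1⟩) hcon)
        have hswap := reach_swap (S := F j ∩ R) hends (hPR F hre' e he hun j u v hends)
          hnrR (Finset.mem_inter.mpr ⟨he', he'R⟩)
        rw [hswap x y]
        exact ih j x y
      · rw [Function.update_of_ne hij]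
        exact ih j x y
  have hF0R : ∀ (i : Fin k) (x y : α), reach ends R x y → reach ends (F0 i ∩ R) x y := by
    intro i x y
    apply reach_of_forall_adj
    rintro x' y' ⟨f, hfR, hfe⟩
    obtain ⟨hfE, F, hre, hun⟩ := Finset.mem_filter.mp hfR
    exact (hinv F hre i x' y').mp (hPR F hre f hfE hun i x' y' hfe)
  have hforR : ∀ i, IsForest V ends (F0 i ∩ R) := fun i =>
    (hF0v.2.1 i).subset Finset.inter_subset_left (hwfF F0 hF0v i)
  have hncompR : ∀ i, ncomp V ends (F0 i ∩ R) = ncomp V ends R := fun i =>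
    ncomp_congr (fun x y => ⟨fun h => reach_mono Finset.inter_subset_right h, hF0R i x y⟩)
  set c := ncomp V ends R with hcdef
  have hc1 : 1 ≤ c := ncomp_pos hV R
  have hcn : c ≤ n := ncomp_le_card V R
  have hcInter : ∀ i, (F0 i ∩ R).card = n - c := by
    intro i
    have h1 := hforR i
    unfold IsForest at h1
    rw [hncompR i] at h1
    omega
  have hEX : E \ (E \ R) = R := by
    rw [sdiff_sdiff_right_self]
    exact inf_eq_right.mpr hRE
  have hXcut := hcut (E \ R) (Finset.sdiff_subset)
  rw [hEX] at hXcut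
  rw [← hcdef] at hXcut
  have hXsum : (E \ R).card ≤ ∑ i, ((F0 i) \ R).card := by
    have hsub2 : E \ R ⊆ Finset.univ.biUnion (fun i => F0 i \ R) := by
      intro f hf
      obtain ⟨hfE, hfR⟩ := Finset.mem_sdiff.mp hf
      have hnall : ¬ ∀ j, f ∉ F0 j := fun hall =>
        hfR (Finset.mem_filter.mpr ⟨hfE, F0, Reachable.refl, hall⟩)
      push_neg at hnall
      obtain ⟨j, hj⟩ := hnall
      exact Finset.mem_biUnion.mpr ⟨j, Finset.mem_univ _, Finset.mem_sdiff.mpr ⟨hj, hfR⟩⟩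
    calc (E \ R).card ≤ (Finset.univ.biUnion (fun i => F0 i \ R)).card :=
        Finset.card_le_card hsub2
    _ ≤ ∑ i, ((F0 i) \ R).card := Finset.card_biUnion_le
  have hsplit : ∀ i, (F0 i ∩ R).card + ((F0 i) \ R).card = (F0 i).card :=
    fun i => Finset.card_inter_add_card_sdiff _ _
  have hMtot : ∑ i, (F0 i).card = M := hF0tot
  have hMlow : k * (n - 1) ≤ M := by
    have h1 : ∑ i, (F0 i).card = ∑ i, ((F0 i ∩ R).card + ((F0 i) \ R).card) :=
      Finset.sum_congr rfl (fun i _ => (hsplit i).symm)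
    have h2 : ∑ i, ((F0 i ∩ R).card + ((F0 i) \ R).card)
        = ∑ i, (F0 i ∩ R).card + ∑ i, ((F0 i) \ R).card := Finset.sum_add_distrib
    have h3 : ∑ i, (F0 i ∩ R).card = k * (n - c) := by
      rw [Finset.sum_congr rfl (fun i _ => hcInter i)]
      simp [Finset.sum_const, mul_comm]
    have h4 : k * (n - c) + k * (c - 1) = k * (n - 1) := by
      rw [← Nat.mul_add]
      congr 1
      omega
    omega
  have hcard_le : ∀ i, (F0 i).card ≤ n - 1 := by
    intro i
    have h2 := hF0v.2.1 i
    have h3 := ncomp_pos (ends := ends) hV (F0 i)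
    unfold IsForest at h2
    omega
  have hall : ∀ i, (F0 i).card = n - 1 := by
    by_contra hco
    push_neg at hco
    obtain ⟨i0, hi0⟩ := hco
    have hlt : (F0 i0).card < n - 1 := lt_of_le_of_ne (hcard_le i0) hi0
    have hstrict : ∑ i, (F0 i).card < ∑ _i : Fin k, (n - 1) :=
      Finset.sum_lt_sum (fun i _ => hcard_le i) ⟨i0, Finset.mem_univ _, hlt⟩
    have hconst : ∑ _i : Fin k, (n - 1) = k * (n - 1) := by
      simp [Finset.sum_const, mul_comm]
    omega
  refine ⟨F0, hF0v.1, ?_, ?_, hF0v.2.2⟩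
  · intro i
    have h2 := hF0v.2.1 i
    unfold IsForest at h2
    have h5 := hall i
    omega
  · intro i
    have h5 := hall i
    omega

end Main

end NW

open NW in
lemma MG.omega_eq_ncomp (G : MG α β) : G.omega = ncomp G.verts G.ends G.edges := by
  have claim : ∀ v ∈ G.verts, {u | G.Reach v u} = ↑(cl G.verts G.ends G.edges v) := by
    intro v hv
    ext u
    simp only [Set.mem_setOf_eq, Finset.mem_coe, mem_cl]
    exact ⟨fun h => ⟨reach_mem G.wf hv h, h⟩, fun h => h.2⟩
  have himg : (fun v => {u | G.Reach v u}) '' ↑G.verts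
      = (fun s : Finset α => (s : Set α)) '' ↑(G.verts.image (cl G.verts G.ends G.edges)) := by
    ext S
    constructor
    · rintro ⟨v, hv, rfl⟩
      exact ⟨cl G.verts G.ends G.edges v,
        by exact_mod_cast Finset.mem_image_of_mem _ hv, (claim v hv).symm⟩
    · rintro ⟨s, hs, rfl⟩
      obtain ⟨v, hv, rfl⟩ := Finset.mem_image.mp (by exact_mod_cast hs)
      exact ⟨v, hv, claim v hv⟩
  rw [MG.omega, himg, Set.ncard_image_of_injective _ Finset.coe_injective,
    Set.ncard_coe_finset]
  rfl

lemma MG.omega_deleteEdges_eq (G : MG α β) (X : Finset β) :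
    (G.deleteEdges X).omega = NW.ncomp G.verts G.ends (G.edges \ X) :=
  MG.omega_eq_ncomp _

/-- Nash-Williams/Tutte: a connected nontrivial multigraph has `k` edge-disjoint
spanning trees iff `|X| ≥ k(ω(G−X)−1)` for every edge subset `X`. -/
theorem stmt0 {α β : Type} [DecidableEq α] [DecidableEq β] (G : MG α β)
    (hG : G.Connected) (hE : G.edges.Nonempty) (k : ℕ) (hk : 0 < k) :
    G.HasTrees k ↔ ∀ X ⊆ G.edges, k * ((G.deleteEdges X).omega - 1) ≤ X.card := by
  classical
  have hVne : G.verts.Nonempty := hG.1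
  constructor
  · rintro ⟨T, hT, hdisj⟩ X hXE
    rw [MG.omega_deleteEdges_eq]
    set c := NW.ncomp G.verts G.ends (G.edges \ X) with hcdef
    have key : ∀ i, c - 1 ≤ ((T i).edges ∩ X).card := by
      intro i
      have hsub : (T i).edges ⊆ G.edges := (hT i).1.2.1
      have hends : ∀ e ∈ (T i).edges, (T i).ends e = G.ends e := (hT i).1.2.2
      have hwfFi : ∀ e ∈ (T i).edges, ∀ w ∈ G.ends e, w ∈ G.verts :=
        fun e he w hw => G.wf e (hsub he) w hw
      have hreachTF : ∀ a b, (T i).Reach a b ↔ NW.reach G.ends (T i).edges a b := by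
        intro a b
        constructor
        · exact Relation.ReflTransGen.mono (r := (T i).Adj) (p := NW.adj G.ends (T i).edges)
            (fun x y (hxy : (T i).Adj x y) => show NW.adj G.ends (T i).edges x y from
              let ⟨e, he, hh⟩ := hxy; ⟨e, he, (hends e he) ▸ hh⟩) a b
        · exact Relation.ReflTransGen.mono (r := NW.adj G.ends (T i).edges) (p := (T i).Adj)
            (fun x y (hxy : NW.adj G.ends (T i).edges x y) => show (T i).Adj x y from
              let ⟨e, he, hh⟩ := hxy; ⟨e, he, (hends e he).symm ▸ hh⟩) a b
      have hvertsT : (T i).verts = G.verts := (hT i).2.1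
      have hnc1 : NW.ncomp G.verts G.ends (T i).edges = 1 := by
        rw [NW.ncomp_eq_one_iff hVne]
        intro a ha b hb
        exact (hreachTF a b).mp ((hT i).2.2.1.2 a (hvertsT ▸ ha) b (hvertsT ▸ hb))
      have h1 : c ≤ NW.ncomp G.verts G.ends ((T i).edges \ X) :=
        NW.ncomp_le_of_subset (Finset.sdiff_subset_sdiff hsub subset_rfl)
      have h2 : NW.ncomp G.verts G.ends ((T i).edges \ X)
          ≤ NW.ncomp G.verts G.ends (T i).edges + ((T i).edges \ ((T i).edges \ X)).card :=
        NW.ncomp_le_of_superset_card Finset.sdiff_subset hwfFi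
      have h3 : (T i).edges \ ((T i).edges \ X) = (T i).edges ∩ X := by
        rw [sdiff_sdiff_right_self]; rfl
      rw [h3, hnc1] at h2
      omega
    have hsum : ∑ i, ((T i).edges ∩ X).card ≤ X.card := by
      have hbU : (Finset.univ.biUnion fun i => (T i).edges ∩ X) ⊆ X := by
        intro f hf
        obtain ⟨j, _, hj⟩ := Finset.mem_biUnion.mp hf
        exact (Finset.mem_inter.mp hj).2
      have hdisj2 : ∀ i ∈ Finset.univ, ∀ j ∈ Finset.univ, i ≠ j →
          Disjoint ((T i).edges ∩ X) ((T j).edges ∩ X) := fun i _ j _ hij =>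
        (hdisj i j hij).mono Finset.inter_subset_left Finset.inter_subset_left
      calc ∑ i, ((T i).edges ∩ X).card
          = (Finset.univ.biUnion fun i => (T i).edges ∩ X).card :=
            (Finset.card_biUnion hdisj2).symm
        _ ≤ X.card := Finset.card_le_card hbU
    have hsum2 : k * (c - 1) ≤ ∑ i, ((T i).edges ∩ X).card := by
      calc k * (c - 1) = ∑ _i : Fin k, (c - 1) := by simp [Finset.sum_const, mul_comm]
        _ ≤ ∑ i, ((T i).edges ∩ X).card := Finset.sum_le_sum (fun i _ => key i)
    omega
  · intro hcut
    have hcut' : ∀ X ⊆ G.edges, k * (NW.ncomp G.verts G.ends (G.edges \ X) - 1) ≤ X.card := by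
      intro X hX
      have h := hcut X hX
      rwa [MG.omega_deleteEdges_eq] at h
    obtain ⟨F, hFsub, hFnc, hFcard, hFdis⟩ :=
      NW.main_packing G.verts G.ends G.edges G.wf hVne k hcut'
    refine ⟨fun i => ⟨G.verts, F i, G.ends, fun e he w hw => G.wf e (hFsub i he) w hw⟩,
      ?_, fun i j hij => hFdis i j hij⟩
    intro i
    refine ⟨⟨subset_rfl, hFsub i, fun e _ => rfl⟩, rfl, ⟨hVne, ?_⟩, ?_⟩
    · intro a ha b hb
      exact (NW.ncomp_eq_one_iff hVne).mp (hFnc i) a ha b hb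
    · show (F i).card = G.verts.card - 1
      have := hFcard i
      omega
end

section
/- For any connected multigraph G with at least one edge, the maximum number of edge-disjoint spanning trees τ(G) equals ⌊η(G)⌋, where η(G) = min over edge subsets X with ω(G−X) > ω(G) of |X|/(ω(G−X)−ω(G)). -/
open Finset

variable {α β : Type} [DecidableEq α] [DecidableEq β]

set_option linter.unusedSectionVars false
set_option maxHeartbeats 1000000

namespace MGaux

variable {α β : Type} [DecidableEq α] [DecidableEq β] (G : MG α β)

def adj (S : Finset β) (a b : α) : Prop := ∃ e ∈ S, G.ends e = s(a, b)

def rel (S : Finset β) : α → α → Prop := Relation.ReflTransGen (adj G S)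

noncomputable def cls (S : Finset β) (v : α) : Set α := {u | rel G S v u}

noncomputable def comps (S : Finset β) : ℕ := ((cls G S) '' (G.verts : Set α)).ncard

variable {G}

lemma adj_symm {S : Finset β} {a b : α} (h : adj G S a b) : adj G S b a := by
  obtain ⟨e, he, h⟩ := h
  exact ⟨e, he, by rw [h, Sym2.eq_swap]⟩

lemma rel_refl {S : Finset β} (a : α) : rel G S a a := Relation.ReflTransGen.refl

lemma rel_symm {S : Finset β} {a b : α} (h : rel G S a b) : rel G S b a := by
  induction h with
  | refl => exact Relation.ReflTransGen.refl
  | tail _ h2 ih => exact Relation.ReflTransGen.head (adj_symm h2) ih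

lemma rel_trans {S : Finset β} {a b c : α} (h : rel G S a b) (h2 : rel G S b c) :
    rel G S a c := Relation.ReflTransGen.trans h h2

lemma rel_mono {S T : Finset β} (hST : S ⊆ T) {a b : α} (h : rel G S a b) : rel G T a b := by
  refine Relation.ReflTransGen.mono ?_ _ _ h
  rintro x y ⟨e, he, hx⟩
  exact ⟨e, hST he, hx⟩

lemma rel_of_mem {S : Finset β} {e : β} (he : e ∈ S) {a b : α} (hab : G.ends e = s(a, b)) :
    rel G S a b := Relation.ReflTransGen.single ⟨e, he, hab⟩

lemma cls_eq_iff {S : Finset β} {v w : α} : cls G S v = cls G S w ↔ rel G S v w := by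
  constructor
  · intro h
    have : w ∈ cls G S w := rel_refl w
    rw [← h] at this
    exact this
  · intro h
    ext u
    exact ⟨fun hu => rel_trans (rel_symm h) hu, fun hu => rel_trans h hu⟩

lemma mem_verts_of_rel {S : Finset β} (hS : S ⊆ G.edges) {a b : α} (ha : a ∈ G.verts)
    (h : rel G S a b) : b ∈ G.verts := by
  induction h with
  | refl => exact ha
  | tail _ h2 ih =>
    obtain ⟨e, he, hx⟩ := h2
    exact G.wf e (hS he) _ (by rw [hx]; exact Sym2.mem_mk_right _ _)

lemma clsSet_finite (S : Finset β) : ((cls G S) '' (G.verts : Set α)).Finite :=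
  (G.verts.finite_toSet).image _

/-- Monotonicity: coarser relation has fewer classes. -/
lemma comps_le_of_rel_le {S T : Finset β} (h : ∀ a b, rel G S a b → rel G T a b) :
    comps G T ≤ comps G S := by
  have himg : (cls G T) '' (G.verts : Set α) =
      (fun K => {u | ∃ w ∈ K, rel G T w u}) '' ((cls G S) '' (G.verts : Set α)) := by
    rw [Set.image_image]
    apply Set.image_congr
    intro v _
    ext u
    simp only [cls, Set.mem_setOf_eq]
    constructor
    · intro hu; exact ⟨v, rel_refl v, hu⟩
    · rintro ⟨w, hw, hwu⟩; exact rel_trans (h _ _ hw) hwu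
  rw [comps, comps, himg]
  exact Set.ncard_image_le (clsSet_finite S)

lemma comps_le_of_subset {S T : Finset β} (hST : S ⊆ T) : comps G T ≤ comps G S :=
  comps_le_of_rel_le (fun _ _ h => rel_mono hST h)

lemma comps_eq_of_rel_iff {S T : Finset β} (h : ∀ a b, rel G S a b ↔ rel G T a b) :
    comps G S = comps G T :=
  le_antisymm (comps_le_of_rel_le (fun a b hh => (h a b).mpr hh))
    (comps_le_of_rel_le (fun a b hh => (h a b).mp hh))

lemma rel_empty {a b : α} (h : rel G (∅ : Finset β) a b) : a = b := by
  induction h with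
  | refl => rfl
  | tail _ h2 _ => exact absurd h2 (by rintro ⟨e, he, _⟩; exact absurd he (by simp))

lemma comps_empty : comps G (∅ : Finset β) = G.verts.card := by
  rw [comps]
  have : Set.InjOn (cls G (∅ : Finset β)) (G.verts : Set α) := by
    intro a _ b _ h
    exact rel_empty (cls_eq_iff.mp h)
  rw [Set.ncard_image_of_injOn this]
  simp [Set.ncard_coe_finset]

/-- The key path-splitting lemma: a walk in `S` either avoids `e` or passes through
its endpoints. -/
lemma rel_split {S : Finset β} {e : β} {a b : α} (hab : G.ends e = s(a, b)) {x y : α}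
    (h : rel G S x y) :
    rel G (S.erase e) x y ∨ (rel G (S.erase e) x a ∧ rel G (S.erase e) b y) ∨
      (rel G (S.erase e) x b ∧ rel G (S.erase e) a y) := by
  induction h with
  | refl => exact Or.inl Relation.ReflTransGen.refl
  | @tail w z _ h2 ih =>
    obtain ⟨f, hf, hfw⟩ := h2
    by_cases hfe : f = e
    · subst hfe
      rw [hab] at hfw
      rcases Sym2.eq_iff.mp hfw.symm with ⟨hwa, hzb⟩ | ⟨hwb, hza⟩
      · subst hwa; subst hzb
        rcases ih with h1 | ⟨h1, h2⟩ | ⟨h1, h2⟩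
        · exact Or.inr (Or.inl ⟨h1, rel_refl _⟩)
        · exact Or.inr (Or.inl ⟨h1, rel_refl _⟩)
        · exact Or.inl h1
      · subst hwb; subst hza
        rcases ih with h1 | ⟨h1, h2⟩ | ⟨h1, h2⟩
        · exact Or.inr (Or.inr ⟨h1, rel_refl _⟩)
        · exact Or.inl h1
        · exact Or.inr (Or.inr ⟨h1, rel_refl _⟩)
    · have hstep : adj G (S.erase e) w z := ⟨f, Finset.mem_erase.mpr ⟨hfe, hf⟩, hfw⟩
      rcases ih with h1 | ⟨h1, h2⟩ | ⟨h1, h2⟩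
      · exact Or.inl (h1.tail hstep)
      · exact Or.inr (Or.inl ⟨h1, h2.tail hstep⟩)
      · exact Or.inr (Or.inr ⟨h1, h2.tail hstep⟩)

end MGaux

set_option linter.unusedSectionVars false

namespace MGaux

variable {α β : Type} [DecidableEq α] [DecidableEq β] {G : MG α β}

lemma comps_pos (hV : G.verts.Nonempty) (S : Finset β) : 1 ≤ comps G S := by
  rw [comps]
  have := (Set.ncard_pos (clsSet_finite S)).mpr
    ⟨_, Set.mem_image_of_mem _ (show (hV.choose : α) ∈ (G.verts : Set α) from hV.choose_spec)⟩
  omega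

lemma cls_mem (v : α) (hv : v ∈ G.verts) (S : Finset β) :
    cls G S v ∈ (cls G S) '' (G.verts : Set α) := Set.mem_image_of_mem _ hv

/-- Deleting one edge increases the number of components by at most one. -/
lemma comps_erase_le (S : Finset β) (hS : S ⊆ G.edges) (e : β) :
    comps G (S.erase e) ≤ comps G S + 1 := by
  by_cases heS : e ∈ S
  swap
  · rw [Finset.erase_eq_of_notMem heS]; omega
  obtain ⟨⟨a, b⟩, hab⟩ := Quot.mk_surjective (G.ends e)
  have hab : G.ends e = s(a, b) := hab.symm
  have hbV : b ∈ G.verts := G.wf e (hS heS) b (by rw [hab]; exact Sym2.mem_mk_right _ _)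
  rw [comps, comps]
  set C' := (cls G (S.erase e)) '' (G.verts : Set α) with hC'
  set f : Set α → Set α := fun K => {u | ∃ w ∈ K, rel G S w u} with hf
  have hfc : ∀ v : α, f (cls G (S.erase e) v) = cls G S v := by
    intro v
    ext u
    simp only [hf, cls, Set.mem_setOf_eq]
    constructor
    · rintro ⟨w, hw, hwu⟩; exact rel_trans (rel_mono (Finset.erase_subset _ _) hw) hwu
    · intro hu; exact ⟨v, rel_refl v, hu⟩
  have hinj : Set.InjOn f (C' \ {cls G (S.erase e) b}) := by
    rintro K1 ⟨hK1, hK1b⟩ K2 ⟨hK2, hK2b⟩ hK12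
    obtain ⟨v, hv, rfl⟩ := hK1
    obtain ⟨w, hw, rfl⟩ := hK2
    rw [hfc, hfc] at hK12
    have hrelS : rel G S v w := cls_eq_iff.mp hK12
    by_contra hne
    have hnrel : ¬ rel G (S.erase e) v w := fun h => hne (cls_eq_iff.mpr h)
    rcases rel_split hab hrelS with h1 | ⟨h1, h2⟩ | ⟨h1, h2⟩
    · exact hnrel h1
    · exact hK2b (by simp only [Set.mem_singleton_iff]; exact cls_eq_iff.mpr (rel_symm h2))
    · exact hK1b (by simp only [Set.mem_singleton_iff]; exact cls_eq_iff.mpr h1)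
  have hC'fin : C'.Finite := clsSet_finite _
  have hb' : cls G (S.erase e) b ∈ C' := cls_mem b hbV (S.erase e)
  have h1 : (C' \ {cls G (S.erase e) b}).ncard + 1 = C'.ncard :=
    Set.ncard_diff_singleton_add_one hb' hC'fin
  have h2 : (C' \ {cls G (S.erase e) b}).ncard = (f '' (C' \ {cls G (S.erase e) b})).ncard :=
    (Set.ncard_image_of_injOn hinj).symm
  have h3 : f '' (C' \ {cls G (S.erase e) b}) ⊆ (cls G S) '' (G.verts : Set α) := by
    rintro K ⟨K', ⟨hK', _⟩, rfl⟩
    obtain ⟨v, hv, rfl⟩ := hK'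
    rw [hfc]
    exact cls_mem v hv S
  have h4 := Set.ncard_le_ncard h3 (clsSet_finite S)
  omega

/-- Inserting an edge whose ends are already connected does not change `rel`. -/
lemma rel_insert_eq {S : Finset β} {e : β} {a b : α} (hab : G.ends e = s(a, b))
    (hconn : rel G S a b) (x y : α) : rel G (insert e S) x y ↔ rel G S x y := by
  constructor
  · intro h
    induction h with
    | refl => exact rel_refl _
    | tail _ h2 ih =>
      obtain ⟨f, hf, hfw⟩ := h2
      rcases Finset.mem_insert.mp hf with rfl | hfS
      · rw [hab] at hfw
        rcases Sym2.eq_iff.mp hfw.symm with ⟨rfl, rfl⟩ | ⟨rfl, rfl⟩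
        · exact rel_trans ih hconn
        · exact rel_trans ih (rel_symm hconn)
      · exact ih.tail ⟨f, hfS, hfw⟩
  · exact rel_mono (Finset.subset_insert e S)

/-- Inserting an edge joining two different components decreases the count by exactly one. -/
lemma comps_insert_joins {S : Finset β} (hS : S ⊆ G.edges) {e : β} (heE : e ∈ G.edges)
    {a b : α} (hab : G.ends e = s(a, b)) (hconn : ¬ rel G S a b) :
    comps G (insert e S) + 1 = comps G S := by
  have haV : a ∈ G.verts := G.wf e heE a (by rw [hab]; exact Sym2.mem_mk_left _ _)
  have hbV : b ∈ G.verts := G.wf e heE b (by rw [hab]; exact Sym2.mem_mk_right _ _)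
  have heS : e ∉ S := fun h => hconn (rel_of_mem h hab)
  -- upper bound: comps (insert e S) ≤ comps S - 1
  set g : Set α → Set α := fun K => {u | ∃ w ∈ K, rel G (insert e S) w u} with hg
  have hgc : ∀ v : α, g (cls G S v) = cls G (insert e S) v := by
    intro v
    ext u
    simp only [hg, cls, Set.mem_setOf_eq]
    constructor
    · rintro ⟨w, hw, hwu⟩; exact rel_trans (rel_mono (Finset.subset_insert _ _) hw) hwu
    · intro hu; exact ⟨v, rel_refl v, hu⟩
  have himg : (cls G (insert e S)) '' (G.verts : Set α) =
      g '' (((cls G S) '' (G.verts : Set α)) \ {cls G S b}) := by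
    apply Set.eq_of_subset_of_subset
    · rintro K ⟨v, hv, rfl⟩
      by_cases hvb : rel G S v b
      · refine ⟨cls G S a, ⟨cls_mem a haV S, ?_⟩, ?_⟩
        · simp only [Set.mem_singleton_iff]
          intro h
          exact hconn (cls_eq_iff.mp h)
        · rw [hgc]
          apply cls_eq_iff.mpr
          have h1 : rel G (insert e S) a b := rel_of_mem (Finset.mem_insert_self e S) hab
          exact rel_trans h1 (rel_mono (Finset.subset_insert _ _) (rel_symm hvb))
      · refine ⟨cls G S v, ⟨cls_mem v hv S, ?_⟩, hgc v⟩
        simp only [Set.mem_singleton_iff]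
        intro h
        exact hvb (cls_eq_iff.mp h)
    · rintro K ⟨K', ⟨hK', _⟩, rfl⟩
      obtain ⟨v, hv, rfl⟩ := hK'
      rw [hgc]
      exact cls_mem v hv _
  have hup : comps G (insert e S) ≤ comps G S - 1 := by
    rw [comps, comps, himg]
    calc (g '' (((cls G S) '' (G.verts : Set α)) \ {cls G S b})).ncard
        ≤ (((cls G S) '' (G.verts : Set α)) \ {cls G S b}).ncard :=
          Set.ncard_image_le ((clsSet_finite S).diff)
      _ = ((cls G S) '' (G.verts : Set α)).ncard - 1 := by
          rw [Set.ncard_diff_singleton_of_mem (cls_mem b hbV S)]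
  have hlow : comps G S ≤ comps G (insert e S) + 1 := by
    have := comps_erase_le (insert e S) (Finset.insert_subset heE hS) e
    rw [Finset.erase_insert heS] at this
    exact this
  have hpos : 1 ≤ comps G S := comps_pos ⟨a, haV⟩ S
  omega

/-- Every graph has at least `n - |S|` components. -/
lemma card_add_comps (S : Finset β) (hS : S ⊆ G.edges) :
    G.verts.card ≤ comps G S + S.card := by
  induction S using Finset.induction with
  | empty => simp [comps_empty]
  | @insert e S heS ih =>
    have hS' : S ⊆ G.edges := fun x hx => hS (Finset.mem_insert_of_mem hx)
    have h1 := comps_erase_le (insert e S) hS e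
    rw [Finset.erase_insert heS] at h1
    have := ih hS'
    rw [Finset.card_insert_of_notMem heS]
    omega

/-- Deleting a set of edges increases the component count by at most its size. -/
lemma comps_sdiff_le (S : Finset β) (hS : S ⊆ G.edges) (Y : Finset β) :
    comps G (S \ Y) ≤ comps G S + Y.card := by
  induction Y using Finset.induction with
  | empty => simp
  | @insert f Y hfY ih =>
    have h1 : S \ insert f Y = (S \ Y).erase f := by
      ext x; simp [Finset.mem_erase, Finset.mem_sdiff, Finset.mem_insert]; tauto
    have h2 := comps_erase_le (S \ Y) (fun x hx => hS (Finset.mem_sdiff.mp hx).1) f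
    rw [h1, Finset.card_insert_of_notMem hfY]
    omega

/-- The exchange lemma: swapping `e'` for `e` along a cycle preserves connectivity. -/
lemma rel_exchange {S : Finset β} {e e' : β} {a b : α} (hab : G.ends e = s(a, b))
    (hconn : rel G S a b) (he' : e' ∈ S) (hnec : ¬ rel G (S.erase e') a b) (x y : α) :
    rel G (insert e (S.erase e')) x y ↔ rel G S x y := by
  obtain ⟨⟨a', b'⟩, hab'⟩ := Quot.mk_surjective (G.ends e')
  have hab' : G.ends e' = s(a', b') := hab'.symm
  have key : rel G (insert e (S.erase e')) a' b' := by
    rcases rel_split hab' hconn with h1 | ⟨h1, h2⟩ | ⟨h1, h2⟩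
    · exact absurd h1 hnec
    · have h3 : rel G (insert e (S.erase e')) a b :=
        rel_of_mem (Finset.mem_insert_self _ _) hab
      have m := Finset.subset_insert e (S.erase e')
      exact rel_trans (rel_mono m (rel_symm h1)) (rel_trans h3 (rel_mono m (rel_symm h2)))
    · have h3 : rel G (insert e (S.erase e')) a b :=
        rel_of_mem (Finset.mem_insert_self _ _) hab
      have m := Finset.subset_insert e (S.erase e')
      exact rel_trans (rel_mono m h2) (rel_trans (rel_symm h3) (rel_mono m h1))
  constructor
  · intro h
    induction h with
    | refl => exact rel_refl _
    | tail _ h2 ih =>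
      obtain ⟨f, hf, hfw⟩ := h2
      rcases Finset.mem_insert.mp hf with rfl | hfS
      · rw [hab] at hfw
        rcases Sym2.eq_iff.mp hfw.symm with ⟨rfl, rfl⟩ | ⟨rfl, rfl⟩
        · exact rel_trans ih hconn
        · exact rel_trans ih (rel_symm hconn)
      · exact ih.tail ⟨f, Finset.mem_of_mem_erase hfS, hfw⟩
  · intro h
    induction h with
    | refl => exact rel_refl _
    | tail _ h2 ih =>
      obtain ⟨f, hf, hfw⟩ := h2
      by_cases hfe' : f = e'
      · subst hfe'
        rw [hab'] at hfw
        rcases Sym2.eq_iff.mp hfw.symm with ⟨rfl, rfl⟩ | ⟨rfl, rfl⟩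
        · exact rel_trans ih key
        · exact rel_trans ih (rel_symm key)
      · exact ih.tail ⟨f, Finset.mem_insert_of_mem (Finset.mem_erase.mpr ⟨hfe', hf⟩), hfw⟩

end MGaux


namespace MGaux

variable {α β : Type} [DecidableEq α] [DecidableEq β] {G : MG α β}

def Forest (G : MG α β) (S : Finset β) : Prop :=
  S ⊆ G.edges ∧ S.card + comps G S = G.verts.card

lemma forest_subset {S T : Finset β} (hF : Forest G T) (hST : S ⊆ T) : Forest G S := by
  obtain ⟨hTE, hT⟩ := hF
  have hSE : S ⊆ G.edges := hST.trans hTE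
  have h1 : comps G (T \ (T \ S)) ≤ comps G T + (T \ S).card := comps_sdiff_le T hTE _
  rw [sdiff_sdiff_right_self, Finset.inf_eq_inter,
    Finset.inter_eq_right.mpr hST] at h1
  have h2 := card_add_comps S hSE
  have h3 : (T \ S).card = T.card - S.card := Finset.card_sdiff_of_subset hST
  have h4 : S.card ≤ T.card := Finset.card_le_card hST
  exact ⟨hSE, by omega⟩

lemma forest_insert {S : Finset β} (hF : Forest G S) {e : β} (heE : e ∈ G.edges)
    {a b : α} (hab : G.ends e = s(a, b)) (hconn : ¬ rel G S a b) :
    Forest G (insert e S) := by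
  obtain ⟨hSE, hS⟩ := hF
  have heS : e ∉ S := fun h => hconn (rel_of_mem h hab)
  have h1 := comps_insert_joins hSE heE hab hconn
  refine ⟨Finset.insert_subset heE hSE, ?_⟩
  rw [Finset.card_insert_of_notMem heS]
  omega

open Classical in
/-- The set of edges necessary for connecting `x` and `y` within `S`. -/
noncomputable def necc (G : MG α β) (S : Finset β) (x y : α) : Finset β :=
  S.filter (fun f => ¬ rel G (S.erase f) x y)

open Classical in
lemma mem_necc {S : Finset β} {x y : α} {f : β} :
    f ∈ necc G S x y ↔ f ∈ S ∧ ¬ rel G (S.erase f) x y := by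
  simp [necc]

lemma forest_aux {D : Finset β} (hD : D ⊆ G.edges) {f g : β} (hgE : g ∈ G.edges)
    (hfD : f ∉ D) (hgD : g ∉ D) (hfg : f ≠ g) {a b c d x y : α}
    (hab : G.ends f = s(a, b)) (hcd : G.ends g = s(c, d)) (hxy : ¬ rel G D x y)
    (h1 : rel G D x a) (h2 : rel G D b y) (h3 : rel G D x c) (h4 : rel G D d y)
    (hForest : Forest G (insert f (insert g D))) : False := by
  have hcd' : ¬ rel G D c d := fun h => hxy (rel_trans h3 (rel_trans h h4))
  have hcomps1 := comps_insert_joins hD hgE hcd hcd'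
  have hsub : D ⊆ insert g D := Finset.subset_insert _ _
  have hrel_ab : rel G (insert g D) a b := by
    have hg : rel G (insert g D) c d := rel_of_mem (Finset.mem_insert_self _ _) hcd
    exact rel_trans (rel_mono hsub (rel_symm h1))
      (rel_trans (rel_mono hsub h3)
        (rel_trans hg (rel_trans (rel_mono hsub h4) (rel_mono hsub (rel_symm h2)))))
  have hcomps2 : comps G (insert f (insert g D)) = comps G (insert g D) :=
    comps_eq_of_rel_iff (rel_insert_eq hab hrel_ab)
  have hfgD : f ∉ insert g D := by simp [hfg, hfD]
  have hcards : (insert f (insert g D)).card = D.card + 2 := by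
    rw [Finset.card_insert_of_notMem hfgD, Finset.card_insert_of_notMem hgD]
  have hcount := card_add_comps D hD
  obtain ⟨_, hfor⟩ := hForest
  omega

lemma forest_path : ∀ (S : Finset β), Forest G S → ∀ {x y : α}, rel G S x y →
    rel G (necc G S x y) x y := by
  intro S
  induction S using Finset.strongInduction with
  | _ S ih =>
    intro hF x y h
    by_cases hex : ∃ f ∈ S, rel G (S.erase f) x y
    · obtain ⟨f, hfS, hrelf⟩ := hex
      have hFe : Forest G (S.erase f) := forest_subset hF (Finset.erase_subset _ _)
      have hN := ih (S.erase f) (Finset.erase_ssubset hfS) hFe hrelf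
      refine rel_mono ?_ hN
      intro g hg
      rw [mem_necc] at hg ⊢
      obtain ⟨hgSf, hgnec⟩ := hg
      have hgS : g ∈ S := Finset.mem_of_mem_erase hgSf
      have hgf : g ≠ f := (Finset.mem_erase.mp hgSf).1
      refine ⟨hgS, fun hrelg => ?_⟩
      set D := (S.erase g).erase f with hDdef
      have hDe : D = (S.erase f).erase g := Finset.erase_right_comm
      have hDnot : ¬ rel G D x y := by rw [hDe]; exact hgnec
      have hDE : D ⊆ G.edges := (Finset.erase_subset _ _).trans
        ((Finset.erase_subset _ _).trans hF.1)
      obtain ⟨⟨a, b⟩, hab⟩ := Quot.mk_surjective (G.ends f)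
      have hab : G.ends f = s(a, b) := hab.symm
      obtain ⟨⟨c, d⟩, hcd⟩ := Quot.mk_surjective (G.ends g)
      have hcd : G.ends g = s(c, d) := hcd.symm
      have hfD : f ∉ D := Finset.notMem_erase _ _
      have hgD : g ∉ D := by rw [hDe]; exact Finset.notMem_erase _ _
      have hgE : g ∈ G.edges := hF.1 hgS
      have hfE : f ∈ G.edges := hF.1 hfS
      have hgE2 : f ∈ G.edges := hfE
      have hFor : Forest G (insert f (insert g D)) := by
        have : insert f (insert g D) = S := by
          ext z
          simp only [Finset.mem_insert, hDdef, Finset.mem_erase]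
          constructor
          · rintro (rfl | rfl | ⟨_, _, hz⟩) <;> first | exact hfS | exact hgS | exact hz
          · intro hz
            by_cases hzf : z = f
            · exact Or.inl hzf
            · by_cases hzg : z = g
              · exact Or.inr (Or.inl hzg)
              · exact Or.inr (Or.inr ⟨hzf, hzg, hz⟩)
        rw [this]; exact hF
      -- split the x-y walk in `S.erase g` at f, and the one in `S.erase f` at g
      have hsplitf := rel_split hab hrelg
      rw [← hDdef] at hsplitf
      have hsplitg := rel_split hcd hrelf
      rw [← hDe] at hsplitg
      have hab' : G.ends f = s(b, a) := by rw [hab, Sym2.eq_swap]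
      have hcd' : G.ends g = s(d, c) := by rw [hcd, Sym2.eq_swap]
      rcases hsplitf with h1 | ⟨h1, h2⟩ | ⟨h1, h2⟩
      · exact hDnot h1
      all_goals rcases hsplitg with h3 | ⟨h3, h4⟩ | ⟨h3, h4⟩
      · exact hDnot h3
      · exact forest_aux hDE hgE hfD hgD hgf.symm hab hcd hDnot h1 h2 h3 h4 hFor
      · exact forest_aux hDE hgE hfD hgD hgf.symm hab hcd' hDnot h1 h2 h3 h4 hFor
      · exact hDnot h3
      · exact forest_aux hDE hgE hfD hgD hgf.symm hab' hcd hDnot h1 h2 h3 h4 hFor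
      · exact forest_aux hDE hgE hfD hgD hgf.symm hab' hcd' hDnot h1 h2 h3 h4 hFor
    · have heq : necc G S x y = S := by
        classical
        apply Finset.filter_true_of_mem
        intro f hf hr
        exact hex ⟨f, hf, hr⟩
      rw [heq]
      exact h

end MGaux


namespace MGaux

variable {α β : Type} [DecidableEq α] [DecidableEq β] {G : MG α β}

def ValidF (G : MG α β) (k : ℕ) (F : Fin k → Finset β) : Prop :=
  (∀ i, Forest G (F i)) ∧ ∀ i j, i ≠ j → Disjoint (F i) (F j)

def wt {k : ℕ} (F : Fin k → Finset β) : ℕ := ∑ i, (F i).card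

def StepF (G : MG α β) (k : ℕ) (F F' : Fin k → Finset β) : Prop :=
  ∃ (j : Fin k) (e e' : β) (a b : α), e ∈ G.edges ∧ (∀ i, e ∉ F i) ∧
    G.ends e = s(a, b) ∧ rel G (F j) a b ∧ e' ∈ F j ∧ ¬ rel G ((F j).erase e') a b ∧
    F' = Function.update F j (insert e ((F j).erase e'))

lemma wt_update {k : ℕ} (F : Fin k → Finset β) (j : Fin k) (S : Finset β) :
    wt (Function.update F j S) + (F j).card = wt F + S.card := by
  classical
  have h1 : wt (Function.update F j S) = S.card + ∑ i ∈ Finset.univ.erase j, (F i).card := by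
    rw [wt, ← Finset.add_sum_erase _ _ (Finset.mem_univ j), Function.update_self]
    congr 1
    apply Finset.sum_congr rfl
    intro i hi
    rw [Function.update_of_ne (Finset.mem_erase.mp hi).1]
  have h2 : wt F = (F j).card + ∑ i ∈ Finset.univ.erase j, (F i).card := by
    rw [wt, ← Finset.add_sum_erase _ _ (Finset.mem_univ j)]
  omega

lemma step_valid {k : ℕ} {F F' : Fin k → Finset β} (hV : ValidF G k F)
    (h : StepF G k F F') :
    ValidF G k F' ∧ wt F' = wt F ∧ ∀ j x y, rel G (F' j) x y ↔ rel G (F j) x y := by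
  obtain ⟨j, e, e', a, b, heE, hun, hab, hconn, he', hnec, rfl⟩ := h
  have hrelj := rel_exchange hab hconn he' hnec
  have hcardj : (insert e ((F j).erase e')).card = (F j).card := by
    have h1 : e ∉ (F j).erase e' := fun h => hun j (Finset.mem_of_mem_erase h)
    have h2 : 1 ≤ (F j).card := Finset.card_pos.mpr ⟨e', he'⟩
    rw [Finset.card_insert_of_notMem h1, Finset.card_erase_of_mem he']
    omega
  have hnewsub : insert e ((F j).erase e') ⊆ G.edges :=
    Finset.insert_subset heE ((Finset.erase_subset _ _).trans (hV.1 j).1)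
  have hforj : Forest G (insert e ((F j).erase e')) := by
    refine ⟨hnewsub, ?_⟩
    rw [hcardj, comps_eq_of_rel_iff hrelj]
    exact (hV.1 j).2
  have hrel' : ∀ j' x y, rel G (Function.update F j (insert e ((F j).erase e')) j') x y ↔
      rel G (F j') x y := by
    intro j' x y
    by_cases hj : j' = j
    · subst hj; rw [Function.update_self]; exact hrelj x y
    · rw [Function.update_of_ne hj]
  refine ⟨⟨?_, ?_⟩, ?_, hrel'⟩
  · intro i
    by_cases hij : i = j
    · subst hij; rw [Function.update_self]; exact hforj
    · rw [Function.update_of_ne hij]; exact hV.1 i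
  · intro i i' hii'
    by_cases hij : i = j <;> by_cases hi'j : i' = j
    · exact absurd (hij.trans hi'j.symm) hii'
    · rw [hij, Function.update_self, Function.update_of_ne hi'j,
        Finset.disjoint_insert_left]
      exact ⟨hun i', Finset.disjoint_of_subset_left (Finset.erase_subset _ _)
        (hV.2 j i' (fun h => hi'j h.symm))⟩
    · rw [hi'j, Function.update_self, Function.update_of_ne hij,
        Finset.disjoint_insert_right]
      exact ⟨hun i, Finset.disjoint_of_subset_right (Finset.erase_subset _ _)
        (hV.2 i j hij)⟩
    · rw [Function.update_of_ne hij, Function.update_of_ne hi'j]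
      exact hV.2 i i' hii'
  · have := wt_update F j (insert e ((F j).erase e'))
    omega

lemma reach_valid {k : ℕ} {F0 F : Fin k → Finset β} (hV0 : ValidF G k F0)
    (h : Relation.ReflTransGen (StepF G k) F0 F) : ValidF G k F ∧ wt F = wt F0 := by
  induction h with
  | refl => exact ⟨hV0, rfl⟩
  | tail hR hstep ih =>
    obtain ⟨hV, hw⟩ := ih
    obtain ⟨hV', hw', _⟩ := step_valid hV hstep
    exact ⟨hV', hw'.trans hw⟩

lemma exists_max_valid (k : ℕ) :
    ∃ F0 : Fin k → Finset β, ValidF G k F0 ∧ ∀ F, ValidF G k F → wt F ≤ wt F0 := by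
  classical
  set WS : Set ℕ := {w | ∃ F : Fin k → Finset β, ValidF G k F ∧ wt F = w} with hWS
  have hne : WS.Nonempty := by
    refine ⟨wt (fun _ : Fin k => (∅ : Finset β)), fun _ => ∅, ⟨?_, ?_⟩, rfl⟩
    · intro i
      exact ⟨Finset.empty_subset _, by simp [comps_empty]⟩
    · intro i j _
      simp
  have hbdd : BddAbove WS := by
    refine ⟨k * G.edges.card, ?_⟩
    rintro w ⟨F, hF, rfl⟩
    calc wt F ≤ ∑ _i : Fin k, G.edges.card :=
          Finset.sum_le_sum (fun i _ => Finset.card_le_card (hF.1 i).1)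
      _ = k * G.edges.card := by simp [Finset.sum_const, Finset.card_univ, mul_comm]
  obtain ⟨F0, hF0, hw0⟩ := Nat.sSup_mem hne hbdd
  exact ⟨F0, hF0, fun F hF => hw0 ▸ le_csSup hbdd ⟨F, hF, rfl⟩⟩

/-- The core packing theorem (hard direction of Tutte–Nash-Williams). -/
theorem packing (hV : G.verts.Nonempty) (k : ℕ)
    (hcut : ∀ X ⊆ G.edges, k * (comps G (G.edges \ X) - 1) ≤ X.card) :
    ∃ F : Fin k → Finset β, (∀ i, Forest G (F i) ∧ comps G (F i) = 1) ∧
      (∀ i j, i ≠ j → Disjoint (F i) (F j)) := by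
  classical
  obtain ⟨F0, hV0, hmax⟩ := exists_max_valid (G := G) k
  set n := G.verts.card with hn
  set E := G.edges with hE
  -- it suffices to show all parts are connected
  suffices hconn : ∀ i, comps G (F0 i) = 1 by
    exact ⟨F0, fun i => ⟨hV0.1 i, hconn i⟩, hV0.2⟩
  by_contra hno
  push_neg at hno
  obtain ⟨i0, hi0⟩ := hno
  have hi0' : 2 ≤ comps G (F0 i0) := by
    have := comps_pos hV (F0 i0)
    omega
  -- the set of edges unused in some reachable family
  set W : Finset β := E.filter
    (fun e => ∃ F, Relation.ReflTransGen (StepF G k) F0 F ∧ ∀ i, e ∉ F i) with hWdef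
  set A : Finset β := E.filter
    (fun e => ∃ a b, G.ends e = s(a, b) ∧ rel G W a b) with hAdef
  have hAE : A ⊆ E := Finset.filter_subset _ _
  have hWA : W ⊆ A := by
    intro e he
    rw [hWdef, Finset.mem_filter] at he
    rw [hAdef, Finset.mem_filter]
    obtain ⟨⟨a, b⟩, hab⟩ := Quot.mk_surjective (G.ends e)
    exact ⟨he.1, a, b, hab.symm, rel_of_mem (by rw [hWdef, Finset.mem_filter]; exact he) hab.symm⟩
  -- every edge unused at a reachable family is connected in each forest
  have h_unused_conn : ∀ F, Relation.ReflTransGen (StepF G k) F0 F → ∀ e ∈ E,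
      (∀ i, e ∉ F i) → ∀ (j : Fin k) (a b : α), G.ends e = s(a, b) → rel G (F j) a b := by
    intro F hF e heE hun j a b hab
    by_contra hno
    obtain ⟨hVF, hwF⟩ := reach_valid hV0 hF
    have hval : ValidF G k (Function.update F j (insert e (F j))) := by
      constructor
      · intro i
        by_cases hij : i = j
        · rw [hij, Function.update_self]
          exact forest_insert (hVF.1 j) heE hab hno
        · rw [Function.update_of_ne hij]; exact hVF.1 i
      · intro i i' hii'
        by_cases hij : i = j <;> by_cases hi'j : i' = j
        · exact absurd (hij.trans hi'j.symm) hii'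
        · rw [hij, Function.update_self, Function.update_of_ne hi'j,
            Finset.disjoint_insert_left]
          exact ⟨hun i', hVF.2 j i' (fun h => hi'j h.symm)⟩
        · rw [hi'j, Function.update_self, Function.update_of_ne hij,
            Finset.disjoint_insert_right]
          exact ⟨hun i, hVF.2 i j hij⟩
        · rw [Function.update_of_ne hij, Function.update_of_ne hi'j]
          exact hVF.2 i i' hii'
    have hwcard := wt_update F j (insert e (F j))
    have hcard : (insert e (F j)).card = (F j).card + 1 :=
      Finset.card_insert_of_notMem (hun j)
    have := hmax _ hval
    omega
  -- key: the ends of any unused edge are connected within `F j ∩ A`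
  have h_ends_in_A : ∀ F, Relation.ReflTransGen (StepF G k) F0 F → ∀ e ∈ E,
      (∀ i, e ∉ F i) → ∀ (j : Fin k) (a b : α), G.ends e = s(a, b) →
      rel G ((F j) ∩ A) a b := by
    intro F hF e heE hun j a b hab
    have hconn := h_unused_conn F hF e heE hun j a b hab
    obtain ⟨hVF, _⟩ := reach_valid hV0 hF
    have hpath := forest_path (F j) (hVF.1 j) hconn
    refine rel_mono ?_ hpath
    intro f hf
    rw [mem_necc] at hf
    obtain ⟨hfFj, hfnec⟩ := hf
    refine Finset.mem_inter.mpr ⟨hfFj, hWA ?_⟩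
    rw [hWdef, Finset.mem_filter]
    refine ⟨(hVF.1 j).1 hfFj, Function.update F j (insert e ((F j).erase f)), ?_, ?_⟩
    · exact hF.tail ⟨j, e, f, a, b, heE, hun, hab, hconn, hfFj, hfnec, rfl⟩
    · intro i
      by_cases hij : i = j
      · rw [hij, Function.update_self, Finset.mem_insert]
        rintro (rfl | hmem)
        · exact hun j hfFj
        · exact Finset.notMem_erase _ _ hmem
      · rw [Function.update_of_ne hij]
        exact Finset.disjoint_left.mp (hVF.2 j i (fun h => hij h.symm)) hfFj
  -- invariance of `rel (F j ∩ A)` along reachability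
  have h_inv : ∀ F, Relation.ReflTransGen (StepF G k) F0 F →
      ∀ (j : Fin k) (x y : α), rel G ((F j) ∩ A) x y ↔ rel G ((F0 j) ∩ A) x y := by
    intro F hF
    induction hF with
    | refl => intro j x y; rfl
    | @tail Fmid Ffin hR hstep ih =>
      obtain ⟨j, e, e', a, b, heE, hun, hab, hconn, he', hnec, rfl⟩ := hstep
      obtain ⟨hVF, _⟩ := reach_valid hV0 hR
      intro j' x y
      by_cases hj : j' = j
      swap
      · rw [Function.update_of_ne hj]; exact ih j' x y
      subst hj
      rw [Function.update_self]
      have heA : e ∈ A := by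
        refine hWA ?_
        rw [hWdef, Finset.mem_filter]
        exact ⟨heE, Fmid, hR, hun⟩
      have he'W : e' ∈ W := by
        rw [hWdef, Finset.mem_filter]
        refine ⟨(hVF.1 j').1 he', Function.update Fmid j' (insert e ((Fmid j').erase e')),
          hR.tail ⟨j', e, e', a, b, heE, hun, hab, hconn, he', hnec, rfl⟩, ?_⟩
        intro i
        by_cases hij : i = j'
        · rw [hij, Function.update_self, Finset.mem_insert]
          rintro (rfl | hmem)
          · exact hun j' he'
          · exact Finset.notMem_erase _ _ hmem
        · rw [Function.update_of_ne hij]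
          exact Finset.disjoint_left.mp (hVF.2 j' i (fun h => hij h.symm)) he'
      have hEq : (insert e ((Fmid j').erase e')) ∩ A = insert e (((Fmid j') ∩ A).erase e') := by
        ext z
        simp only [Finset.mem_inter, Finset.mem_insert, Finset.mem_erase]
        constructor
        · rintro ⟨rfl | ⟨hz1, hz2⟩, hzA⟩
          · exact Or.inl rfl
          · exact Or.inr ⟨hz1, hz2, hzA⟩
        · rintro (rfl | ⟨hz1, hz2, hzA⟩)
          · exact ⟨Or.inl rfl, heA⟩
          · exact ⟨Or.inr ⟨hz1, hz2⟩, hzA⟩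
      rw [hEq]
      have hrelA : rel G ((Fmid j') ∩ A) a b := h_ends_in_A Fmid hR e heE hun j' a b hab
      have he'A : e' ∈ (Fmid j') ∩ A := Finset.mem_inter.mpr ⟨he', hWA he'W⟩
      have hnec' : ¬ rel G (((Fmid j') ∩ A).erase e') a b := by
        intro hh
        refine hnec (rel_mono ?_ hh)
        intro z hz
        rw [Finset.mem_erase] at hz ⊢
        exact ⟨hz.1, (Finset.mem_inter.mp hz.2).1⟩
      rw [rel_exchange hab hrelA he'A hnec' x y]
      exact ih j' x y
  -- every `W`-edge has its ends connected in `F0 j ∩ A`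
  have hW_conn : ∀ (j : Fin k), ∀ g ∈ W, ∀ (p q : α), G.ends g = s(p, q) →
      rel G ((F0 j) ∩ A) p q := by
    intro j g hg p q hpq
    rw [hWdef, Finset.mem_filter] at hg
    obtain ⟨hgE, F, hR, hun⟩ := hg
    exact (h_inv F hR j p q).mp (h_ends_in_A F hR g hgE hun j p q hpq)
  have hrelW_le : ∀ (j : Fin k) (x y : α), rel G W x y → rel G ((F0 j) ∩ A) x y := by
    intro j x y h
    induction h with
    | refl => exact rel_refl _
    | tail _ h2 ih =>
      obtain ⟨g, hgW, hg⟩ := h2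
      exact rel_trans ih (hW_conn j g hgW _ _ hg)
  have hrelA_le : ∀ (j : Fin k) (x y : α), rel G A x y → rel G ((F0 j) ∩ A) x y := by
    intro j x y h
    induction h with
    | refl => exact rel_refl _
    | tail _ h2 ih =>
      obtain ⟨f, hfA, hf⟩ := h2
      rw [hAdef, Finset.mem_filter] at hfA
      obtain ⟨hfE, c, d, hcd, hWcd⟩ := hfA
      rw [hcd] at hf
      refine rel_trans ih ?_
      rcases Sym2.eq_iff.mp hf with ⟨rfl, rfl⟩ | ⟨rfl, rfl⟩
      · exact hrelW_le j _ _ hWcd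
      · exact rel_symm (hrelW_le j _ _ hWcd)
  have hcompsA : ∀ (j : Fin k), comps G ((F0 j) ∩ A) = comps G A := by
    intro j
    refine le_antisymm ?_ ?_
    · exact comps_le_of_rel_le (hrelA_le j)
    · exact comps_le_of_rel_le (fun x y h => rel_mono Finset.inter_subset_right h)
  -- counting
  set c := comps G A with hc
  have hc1 : 1 ≤ c := comps_pos hV A
  have hXsub : E \ A ⊆ Finset.univ.biUnion (fun j => (F0 j) \ A) := by
    intro e he
    rw [Finset.mem_sdiff] at he
    obtain ⟨heE, henA⟩ := he
    rw [Finset.mem_biUnion]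
    by_contra hcon
    push_neg at hcon
    have hun : ∀ i, e ∉ F0 i := by
      intro i hi
      exact hcon i (Finset.mem_univ i) (Finset.mem_sdiff.mpr ⟨hi, henA⟩)
    refine henA (hWA ?_)
    rw [hWdef, Finset.mem_filter]
    exact ⟨heE, F0, Relation.ReflTransGen.refl, hun⟩
  have hcard1 : (E \ A).card ≤ ∑ j, ((F0 j) \ A).card :=
    (Finset.card_le_card hXsub).trans (Finset.card_biUnion_le)
  have hparts : ∀ (j : Fin k), ((F0 j) ∩ A).card + c = n := by
    intro j
    have hforj : Forest G ((F0 j) ∩ A) := forest_subset (hV0.1 j) Finset.inter_subset_left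
    rw [← hcompsA j]
    exact hforj.2
  have hsplit : ∀ (j : Fin k), ((F0 j) ∩ A).card + ((F0 j) \ A).card = (F0 j).card := by
    intro j
    exact Finset.card_inter_add_card_sdiff _ _
  have hcut1 : k * (c - 1) ≤ (E \ A).card := by
    have h := hcut (E \ A) (Finset.sdiff_subset)
    have hEA : E \ (E \ A) = A := by
      rw [sdiff_sdiff_right_self, Finset.inf_eq_inter, Finset.inter_eq_right.mpr hAE]
    rw [hEA] at h
    exact h
  -- sums
  have hs1 : (∑ j, ((F0 j) ∩ A).card) + k * c = k * n := by
    have : ∑ j : Fin k, (((F0 j) ∩ A).card + c) = ∑ _j : Fin k, n :=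
      Finset.sum_congr rfl (fun j _ => hparts j)
    rw [Finset.sum_add_distrib, Finset.sum_const, Finset.sum_const, Finset.card_univ,
      Fintype.card_fin, smul_eq_mul, smul_eq_mul] at this
    omega
  have hs2 : (∑ j, ((F0 j) ∩ A).card) + (∑ j, ((F0 j) \ A).card) = wt F0 := by
    rw [wt, ← Finset.sum_add_distrib]
    exact Finset.sum_congr rfl (fun j _ => hsplit j)
  have hs3 : wt F0 + (∑ j, comps G (F0 j)) = k * n := by
    have : ∑ j : Fin k, ((F0 j).card + comps G (F0 j)) = ∑ _j : Fin k, n :=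
      Finset.sum_congr rfl (fun j _ => (hV0.1 j).2)
    rw [Finset.sum_add_distrib, Finset.sum_const, Finset.card_univ,
      Fintype.card_fin, smul_eq_mul] at this
    rw [wt]
    omega
  have hs4 : k + 1 ≤ ∑ j, comps G (F0 j) := by
    have h1 : ∑ _j : Fin k, 1 < ∑ j, comps G (F0 j) := by
      apply Finset.sum_lt_sum
      · intro i _
        exact comps_pos hV _
      · exact ⟨i0, Finset.mem_univ i0, by omega⟩
    simp only [Finset.sum_const, Finset.card_univ, Fintype.card_fin, smul_eq_mul,
      mul_one] at h1
    omega
  have hmul : k * c = k * (c - 1) + k := by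
    have hceq : c = (c - 1) + 1 := by omega
    calc k * c = k * ((c - 1) + 1) := by rw [← hceq]
      _ = k * (c - 1) + k := by ring
  omega

end MGaux


namespace MGaux

variable {α β : Type} [DecidableEq α] [DecidableEq β] {G : MG α β}

lemma omega_eq : G.omega = comps G G.edges := rfl

lemma omega_delete (X : Finset β) : (G.deleteEdges X).omega = comps G (G.edges \ X) := rfl

lemma comps_eq_one_of_rel (hV : G.verts.Nonempty) {S : Finset β}
    (h : ∀ a ∈ G.verts, ∀ b ∈ G.verts, rel G S a b) : comps G S = 1 := by
  obtain ⟨a0, ha0⟩ := hV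
  have himg : (cls G S) '' (G.verts : Set α) = {cls G S a0} := by
    apply subset_antisymm
    · rintro _ ⟨v, hv, rfl⟩
      exact cls_eq_iff.mpr (h v hv a0 ha0)
    · rintro _ rfl
      exact cls_mem a0 ha0 S
  rw [comps, himg, Set.ncard_singleton]

lemma rel_of_comps_eq_one {S : Finset β} (h : comps G S = 1) {a b : α}
    (ha : a ∈ G.verts) (hb : b ∈ G.verts) : rel G S a b := by
  obtain ⟨K, hK⟩ := Set.ncard_eq_one.mp h
  have h1 : cls G S a ∈ (cls G S) '' (G.verts : Set α) := cls_mem a ha S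
  have h2 : cls G S b ∈ (cls G S) '' (G.verts : Set α) := cls_mem b hb S
  rw [hK, Set.mem_singleton_iff] at h1 h2
  exact cls_eq_iff.mp (h1.trans h2.symm)

lemma comps_conn (hG : G.Connected) : comps G G.edges = 1 :=
  comps_eq_one_of_rel hG.1 (fun a ha b hb => hG.2 a ha b hb)

lemma omega_conn (hG : G.Connected) : G.omega = 1 := by
  rw [omega_eq]; exact comps_conn hG

/-- the subgraph of `G` on all vertices with edge set `S`. -/
def mkSub (G : MG α β) (S : Finset β) (hS : S ⊆ G.edges) : MG α β :=
  ⟨G.verts, S, G.ends, fun e he => G.wf e (hS he)⟩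

lemma mkSub_spanningTree {S : Finset β} (hS : S ⊆ G.edges) (hV : G.verts.Nonempty)
    (hcomps : comps G S = 1) (hcard : S.card + 1 = G.verts.card) :
    G.IsSpanningTree (mkSub G S hS) := by
  refine ⟨⟨subset_rfl, hS, fun e _ => rfl⟩, rfl, ⟨hV, ?_⟩, ?_⟩
  · intro a ha b hb
    exact rel_of_comps_eq_one hcomps ha hb
  · show S.card = G.verts.card - 1
    omega

lemma spanningTree_facts {T : MG α β} (hT : G.IsSpanningTree T) :
    T.edges ⊆ G.edges ∧ comps G T.edges = 1 ∧ T.edges.card + 1 = G.verts.card := by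
  obtain ⟨⟨hVsub, hEsub, hends⟩, hverts, hconn, hcard⟩ := hT
  have hadj : ∀ a b, T.Adj a b ↔ adj G T.edges a b := by
    intro a b
    constructor
    · rintro ⟨e, he, h⟩; exact ⟨e, he, by rw [← hends e he]; exact h⟩
    · rintro ⟨e, he, h⟩; exact ⟨e, he, by rw [hends e he]; exact h⟩
  have hrel : ∀ a b, T.Reach a b → rel G T.edges a b := by
    intro a b h
    exact Relation.ReflTransGen.mono (fun x y hxy => (hadj x y).mp hxy) _ _ h
  have hVne : G.verts.Nonempty := by
    obtain ⟨v, hv⟩ := hconn.1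
    exact ⟨v, hverts ▸ hv⟩
  have hc : comps G T.edges = 1 := by
    apply comps_eq_one_of_rel hVne
    intro a ha b hb
    exact hrel a b (hconn.2 a (hverts ▸ ha) b (hverts ▸ hb))
  have hn1 : 1 ≤ G.verts.card := Finset.card_pos.mpr hVne
  have hcard2 : T.edges.card + 1 = G.verts.card := by
    rw [hcard, hverts]
    omega
  exact ⟨hEsub, hc, hcard2⟩

lemma count_lower {m : ℕ} (hm : G.HasTrees m) (X : Finset β) :
    m * (comps G (G.edges \ X) - 1) ≤ X.card := by
  classical
  obtain ⟨T, hT, hdisj⟩ := hm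
  set c := comps G (G.edges \ X) with hc
  have key : ∀ i : Fin m, c - 1 ≤ ((T i).edges ∩ X).card := by
    intro i
    obtain ⟨hEsub, hcomps, _⟩ := spanningTree_facts (hT i)
    have h1 : comps G (G.edges \ X) ≤ comps G ((T i).edges \ X) :=
      comps_le_of_subset (fun z hz => by
        rw [Finset.mem_sdiff] at hz ⊢
        exact ⟨hEsub hz.1, hz.2⟩)
    have h2 : (T i).edges \ X = (T i).edges \ ((T i).edges ∩ X) := by
      rw [Finset.sdiff_inter_self_left]
    have h3 : comps G ((T i).edges \ ((T i).edges ∩ X)) ≤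
        comps G ((T i).edges) + ((T i).edges ∩ X).card :=
      comps_sdiff_le _ hEsub _
    rw [← h2, hcomps] at h3
    omega
  have hsum : ∑ i : Fin m, ((T i).edges ∩ X).card ≤ X.card := by
    rw [← Finset.card_biUnion]
    · apply Finset.card_le_card
      intro z hz
      rw [Finset.mem_biUnion] at hz
      obtain ⟨i, _, hi⟩ := hz
      exact (Finset.mem_inter.mp hi).2
    · intro i _ j _ hij
      exact Finset.disjoint_of_subset_left Finset.inter_subset_left
        (Finset.disjoint_of_subset_right Finset.inter_subset_left (hdisj i j hij))
  calc m * (c - 1) = ∑ _i : Fin m, (c - 1) := by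
        simp [Finset.sum_const, Finset.card_univ]
    _ ≤ ∑ i : Fin m, ((T i).edges ∩ X).card := Finset.sum_le_sum (fun i _ => key i)
    _ ≤ X.card := hsum

lemma hasTrees_zero : G.HasTrees 0 :=
  ⟨fun i => i.elim0, fun i => i.elim0, fun i => i.elim0⟩

lemma hasTrees_bdd (hn : 2 ≤ G.verts.card) : BddAbove {m | G.HasTrees m} := by
  classical
  refine ⟨G.edges.card, ?_⟩
  rintro m ⟨T, hT, hdisj⟩
  have hne : ∀ i : Fin m, ((T i).edges).Nonempty := by
    intro i
    obtain ⟨_, _, hcard⟩ := spanningTree_facts (hT i)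
    rw [← Finset.card_pos]
    omega
  have hsub : ∀ i : Fin m, (T i).edges ⊆ G.edges :=
    fun i => (spanningTree_facts (hT i)).1
  choose f hf using hne
  have hinj : Function.Injective f := by
    intro i j hij
    by_contra hne'
    exact Finset.disjoint_left.mp (hdisj i j hne') (hf i) (hij ▸ hf j)
  calc m = Fintype.card (Fin m) := (Fintype.card_fin m).symm
    _ ≤ G.edges.card := by
        rw [← Finset.card_univ]
        apply Finset.card_le_card_of_injOn f (fun i _ => hsub i (hf i))
        exact fun i _ j _ h => hinj h

end MGaux

/-- For a connected nontrivial multigraph, `τ(G) = ⌊η(G)⌋`. -/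
theorem stmt1 {α β : Type} [DecidableEq α] [DecidableEq β] (G : MG α β)
    (hG : G.Connected) (hE : G.edges.Nonempty) :
    (G.tau : ℤ) = ⌊G.eta⌋ := by
  classical
  have hVne := hG.1
  have homega : G.omega = 1 := MGaux.omega_conn hG
  have hn1 : 1 ≤ G.verts.card := Finset.card_pos.mpr hVne
  by_cases hn : G.verts.card = 1
  · -- single vertex: eta = 0, tau = 0
    have hcomps_all : ∀ S : Finset β, MGaux.comps G S = 1 := by
      intro S
      have h1 := MGaux.comps_pos hVne S
      have h2 : MGaux.comps G S ≤ MGaux.comps G (∅ : Finset β) :=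
        MGaux.comps_le_of_subset (Finset.empty_subset S)
      rw [MGaux.comps_empty, hn] at h2
      omega
    have heta : G.eta = 0 := by
      rw [MG.eta]
      convert Real.sInf_empty
      rw [Set.eq_empty_iff_forall_notMem]
      rintro x ⟨X, hX, hlt, _⟩
      rw [MGaux.omega_delete, homega, hcomps_all] at hlt
      omega
    have htau : G.tau = 0 := by
      have hall : ∀ m, G.HasTrees m := by
        intro m
        refine ⟨fun _ => MGaux.mkSub G ∅ (Finset.empty_subset _), fun i => ?_, fun i j _ => ?_⟩
        · apply MGaux.mkSub_spanningTree _ hVne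
          · rw [MGaux.comps_empty, hn]
          · simp [hn]
        · simp [MGaux.mkSub]
      have hnb : ¬ BddAbove {m | G.HasTrees m} := by
        rintro ⟨B, hB⟩
        have h1 : B + 1 ≤ B := hB (hall (B + 1))
        omega
      rw [MG.tau, csSup_of_not_bddAbove hnb, csSup_empty]
      rfl
    rw [htau, heta]
    simp
  · have hn2 : 2 ≤ G.verts.card := by omega
    have hbdd := MGaux.hasTrees_bdd (G := G) hn2
    have htau_mem : G.HasTrees G.tau := by
      have h0 : 0 ∈ {m | G.HasTrees m} := MGaux.hasTrees_zero (G := G)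
      exact Nat.sSup_mem ⟨0, h0⟩ hbdd
    -- basic facts about the eta set
    set Se : Set ℝ := {x : ℝ | ∃ X : Finset β, X ⊆ G.edges ∧
      G.omega < (G.deleteEdges X).omega ∧
      x = (X.card : ℝ) / (((G.deleteEdges X).omega : ℝ) - (G.omega : ℝ))} with hSe
    have hetaS : G.eta = sInf Se := rfl
    have hSene : Se.Nonempty := by
      refine ⟨(G.edges.card : ℝ) /
        (((G.deleteEdges G.edges).omega : ℝ) - (G.omega : ℝ)), G.edges, subset_rfl, ?_, rfl⟩
      rw [MGaux.omega_delete, homega, Finset.sdiff_self, MGaux.comps_empty]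
      omega
    have hSe_nonneg : ∀ x ∈ Se, (0 : ℝ) ≤ x := by
      rintro x ⟨X, hX, hlt, rfl⟩
      apply div_nonneg (Nat.cast_nonneg _)
      have : (G.omega : ℝ) < ((G.deleteEdges X).omega : ℝ) := by exact_mod_cast hlt
      linarith
    have hSebdd : BddBelow Se := ⟨0, fun x hx => hSe_nonneg x hx⟩
    have heta_nonneg : 0 ≤ G.eta := by
      rw [hetaS]
      exact Real.sInf_nonneg hSe_nonneg
    -- upper bound: tau ≤ floor eta
    have hup : (G.tau : ℤ) ≤ ⌊G.eta⌋ := by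
      rw [Int.le_floor]
      push_cast
      rw [hetaS]
      apply le_csInf hSene
      rintro x ⟨X, hX, hlt, rfl⟩
      rw [MGaux.omega_delete, homega] at hlt ⊢
      rw [Nat.cast_one]
      set c := MGaux.comps G (G.edges \ X) with hc
      have hcount := MGaux.count_lower htau_mem X
      have hcpos : (1 : ℝ) < (c : ℝ) := by exact_mod_cast hlt
      rw [le_div_iff₀ (by linarith : (0:ℝ) < (c : ℝ) - 1)]
      have hcast : ((G.tau * (c - 1) : ℕ) : ℝ) = (G.tau : ℝ) * ((c : ℝ) - 1) := by
        push_cast [Nat.cast_sub (by omega : 1 ≤ c)]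
        ring
      calc (G.tau : ℝ) * ((c:ℝ) - 1) = ((G.tau * (c - 1) : ℕ) : ℝ) := hcast.symm
        _ ≤ (X.card : ℝ) := by exact_mod_cast hcount
    -- lower bound: floor eta ≤ tau
    have hlow : ⌊G.eta⌋ ≤ (G.tau : ℤ) := by
      set k := ⌊G.eta⌋.toNat with hk
      have hkZ : (k : ℤ) = ⌊G.eta⌋ := Int.toNat_of_nonneg (Int.floor_nonneg.mpr heta_nonneg)
      have hkR : (k : ℝ) ≤ G.eta := by
        have := Int.floor_le G.eta
        rw [← hkZ] at this
        exact_mod_cast this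
      have hcut : ∀ X ⊆ G.edges, k * (MGaux.comps G (G.edges \ X) - 1) ≤ X.card := by
        intro X hX
        set c := MGaux.comps G (G.edges \ X) with hc
        by_cases hcle : c ≤ 1
        · have : c - 1 = 0 := by omega
          rw [this, Nat.mul_zero]
          exact Nat.zero_le _
        · have hc2 : 2 ≤ c := by omega
          have hmem : (X.card : ℝ) / ((c : ℝ) - 1) ∈ Se := by
            refine ⟨X, hX, ?_, ?_⟩
            · rw [MGaux.omega_delete, homega, ← hc]; omega
            · rw [MGaux.omega_delete, homega, ← hc]
              norm_num
          have hinf : G.eta ≤ (X.card : ℝ) / ((c : ℝ) - 1) := by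
            rw [hetaS]
            exact csInf_le hSebdd hmem
          have hcpos : (0:ℝ) < (c : ℝ) - 1 := by
            have : (1 : ℝ) < (c : ℝ) := by exact_mod_cast (by omega : 1 < c)
            linarith
          have hfinal : (k : ℝ) * ((c:ℝ) - 1) ≤ (X.card : ℝ) := by
            rw [← le_div_iff₀ hcpos]
            exact hkR.trans hinf
          have hcast : ((k * (c - 1) : ℕ) : ℝ) = (k : ℝ) * ((c : ℝ) - 1) := by
            push_cast [Nat.cast_sub (by omega : 1 ≤ c)]
            ring
          rw [← hcast] at hfinal
          exact_mod_cast hfinal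
      obtain ⟨F, hF, hdisj⟩ := MGaux.packing hVne k hcut
      have hHT : G.HasTrees k := by
        refine ⟨fun i => MGaux.mkSub G (F i) (hF i).1.1, fun i => ?_, fun i j hij => ?_⟩
        · apply MGaux.mkSub_spanningTree _ hVne (hF i).2
          have h1 := (hF i).1.2
          have h2 := (hF i).2
          omega
        · exact hdisj i j hij
      have : k ≤ G.tau := le_csSup hbdd hHT
      rw [← hkZ]
      exact_mod_cast this
    exact le_antisymm hup hlow
end

section
/- For any nontrivial connected multigraph G, η(G) ≤ d(G) ≤ γ(G), where d(G) = |E(G)|/(|V(G)|−1), η(G) is the minimum of |X|/(ω(G−X)−1) over edge sets X disconnecting G, and γ(G) is the maximum density d(H) over nontrivial subgraphs H of G. -/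
open Finset

variable {α β : Type} [DecidableEq α] [DecidableEq β]

namespace MGAux

open MG

lemma adj_symm (G : MG α β) : Symmetric G.Adj := by
  rintro a b ⟨e, he, h⟩
  exact ⟨e, he, by rw [h, Sym2.eq_swap]⟩

lemma reach_symm (G : MG α β) : Symmetric G.Reach :=
  haveI : Std.Symm G.Adj := ⟨adj_symm G⟩
  fun a b h => (Relation.ReflTransGen.stdSymm (r := G.Adj)).symm a b h

lemma omega_le_card (G : MG α β) : G.omega ≤ G.verts.card := by
  calc G.omega ≤ (G.verts : Set α).ncard :=
        Set.ncard_image_le (G.verts.finite_toSet)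
    _ = G.verts.card := Set.ncard_coe_finset _

lemma omega_connected (G : MG α β) (hG : G.Connected) : G.omega = 1 := by
  obtain ⟨⟨v₀, hv₀⟩, hconn⟩ := hG
  have : (fun v => {u | G.Reach v u}) '' (G.verts : Set α) = {{u | G.Reach v₀ u}} := by
    apply Set.eq_singleton_iff_unique_mem.mpr
    constructor
    · exact ⟨v₀, hv₀, rfl⟩
    · rintro S ⟨v, hv, rfl⟩
      ext u
      simp only [Set.mem_setOf_eq]
      constructor
      · intro h; exact (hconn v₀ hv₀ v hv).trans h
      · intro h; exact (hconn v hv v₀ hv₀).trans h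
  rw [MG.omega, this, Set.ncard_singleton]

lemma omega_deleteAll (G : MG α β) : (G.deleteEdges G.edges).omega = G.verts.card := by
  have hadj : ∀ a b : α, ¬ (G.deleteEdges G.edges).Adj a b := by
    rintro a b ⟨e, he, -⟩
    simp [deleteEdges] at he
  have hreach : ∀ v : α, {u | (G.deleteEdges G.edges).Reach v u} = {v} := by
    intro v
    ext u
    simp only [Set.mem_setOf_eq, Set.mem_singleton_iff]
    constructor
    · intro h
      induction h with
      | refl => rfl
      | tail _ hadj' ih => exact absurd hadj' (hadj _ _)
    · rintro rfl; exact Relation.ReflTransGen.refl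
  have : (fun v => {u | (G.deleteEdges G.edges).Reach v u}) '' ((G.deleteEdges G.edges).verts : Set α)
      = (fun v => ({v} : Set α)) '' ((G.verts : Set α)) := by
    apply Set.image_congr
    intro v _; exact hreach v
  rw [MG.omega, this, Set.ncard_image_of_injective _ (fun a b h => by
    simpa using h), Set.ncard_coe_finset]

end MGAux

open MGAux

/-- For a nontrivial connected multigraph, `η(G) ≤ d(G) ≤ γ(G)`. -/
theorem stmt2 {α β : Type} [DecidableEq α] [DecidableEq β] (G : MG α β)
    (hG : G.Connected) (hE : G.edges.Nonempty) :
    G.eta ≤ G.dens ∧ G.dens ≤ G.gamma := by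
  have hω : G.omega = 1 := omega_connected G hG
  have hv1 : 1 ≤ G.verts.card := Finset.card_pos.mpr hG.1
  constructor
  · -- η ≤ d
    rcases eq_or_lt_of_le hv1 with hcard | hcard
    · -- single vertex: dens = 0, eta set is empty so sInf = 0
      have hd : G.dens = 0 := by
        rw [MG.dens, hω, ← hcard]
        simp
      have hempty : {x : ℝ | ∃ X : Finset β, X ⊆ G.edges ∧
          G.omega < (G.deleteEdges X).omega ∧
          x = (X.card : ℝ) / (((G.deleteEdges X).omega : ℝ) - (G.omega : ℝ))} = ∅ := by
        ext x
        simp only [Set.mem_setOf_eq, Set.mem_empty_iff_false, iff_false, not_exists]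
        rintro X ⟨hX, hlt, -⟩
        have h1 : (G.deleteEdges X).omega ≤ G.verts.card := omega_le_card _
        omega
      rw [MG.eta, hempty, Real.sInf_empty, hd]
    · -- at least two vertices: X = G.edges witnesses dens G
      have hmem : G.dens ∈ {x : ℝ | ∃ X : Finset β, X ⊆ G.edges ∧
          G.omega < (G.deleteEdges X).omega ∧
          x = (X.card : ℝ) / (((G.deleteEdges X).omega : ℝ) - (G.omega : ℝ))} := by
        refine ⟨G.edges, Finset.Subset.refl _, ?_, ?_⟩
        · rw [omega_deleteAll, hω]; exact hcard
        · rw [omega_deleteAll, MG.dens]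
      have hbdd : BddBelow {x : ℝ | ∃ X : Finset β, X ⊆ G.edges ∧
          G.omega < (G.deleteEdges X).omega ∧
          x = (X.card : ℝ) / (((G.deleteEdges X).omega : ℝ) - (G.omega : ℝ))} := by
        refine ⟨0, ?_⟩
        rintro x ⟨X, hX, hlt, rfl⟩
        apply div_nonneg (Nat.cast_nonneg _)
        have : (G.omega : ℝ) < ((G.deleteEdges X).omega : ℝ) := by exact_mod_cast hlt
        linarith
      exact csInf_le hbdd hmem
  · -- d ≤ γ
    have hbdd : BddAbove {x : ℝ | ∃ H : MG α β, MG.IsSubgraph H G ∧ H.edges.Nonempty ∧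
        MG.dens H = x} := by
      refine ⟨(G.edges.card : ℝ), ?_⟩
      rintro x ⟨H, hsub, hne, rfl⟩
      have hEle : (H.edges.card : ℝ) ≤ (G.edges.card : ℝ) := by
        exact_mod_cast Finset.card_le_card hsub.2.1
      have hωle : H.omega ≤ H.verts.card := omega_le_card H
      rw [MG.dens]
      rcases eq_or_lt_of_le hωle with heq | hlt
      · rw [heq]; simp
      · have hden : (1 : ℝ) ≤ (H.verts.card : ℝ) - (H.omega : ℝ) := by
          have : H.omega + 1 ≤ H.verts.card := hlt
          have := Nat.cast_le (α := ℝ).mpr this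
          push_cast at this
          linarith
        calc (H.edges.card : ℝ) / ((H.verts.card : ℝ) - (H.omega : ℝ))
            ≤ (H.edges.card : ℝ) / 1 := by
              apply div_le_div_of_nonneg_left (Nat.cast_nonneg _) (by linarith) hden
          _ = (H.edges.card : ℝ) := div_one _
          _ ≤ (G.edges.card : ℝ) := hEle
    have hmem : G.dens ∈ {x : ℝ | ∃ H : MG α β, MG.IsSubgraph H G ∧ H.edges.Nonempty ∧
        MG.dens H = x} :=
      ⟨G, ⟨Finset.Subset.refl _, Finset.Subset.refl _, fun _ _ => rfl⟩, hE, rfl⟩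
    exact le_csSup hbdd hmem
end

section
/- If a multigraph G is k-maximal, then κ'(G) = κ̄'(G) = k, where κ̄'(G) = max{κ'(H) : H is a subgraph of G}. -/
open Finset

variable {α β : Type} [DecidableEq α] [DecidableEq β]

section Aux

lemma mg_reach_mono {H G : MG α β} (hs : H.IsSubgraph G) {a b : α} (hr : H.Reach a b) :
    G.Reach a b := by
  refine Relation.ReflTransGen.mono ?_ _ _ hr
  rintro x y ⟨e, he, hend⟩
  exact ⟨e, hs.2.1 he, (hs.2.2 e he).symm.trans hend⟩

lemma mg_kappa_le_card (H : MG α β) : H.kappa ≤ H.edges.card := by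
  unfold MG.kappa
  by_cases hne : {n | ∃ X ⊆ H.edges, X.card = n ∧ ¬ (H.deleteEdges X).Connected}.Nonempty
  · obtain ⟨n, X, hX, hcard, hd⟩ := hne
    exact le_trans (Nat.sInf_le ⟨X, hX, hcard, hd⟩) (hcard ▸ Finset.card_le_card hX)
  · rw [Set.not_nonempty_iff_eq_empty.mp hne, Nat.sInf_empty]
    exact Nat.zero_le _

lemma mg_kappabar_bdd (G : MG α β) :
    BddAbove {n | ∃ H : MG α β, H.IsSubgraph G ∧ MG.kappa H = n} := by
  refine ⟨G.edges.card, ?_⟩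
  rintro n ⟨H, hs, rfl⟩
  exact le_trans (mg_kappa_le_card H) (Finset.card_le_card hs.2.1)

lemma mg_del_all_not_connected (G : MG α β) (hn : 2 ≤ G.verts.card) :
    ¬ (G.deleteEdges G.edges).Connected := by
  obtain ⟨a, ha, b, hb, hab⟩ := Finset.one_lt_card.mp hn
  rintro ⟨-, hcon⟩
  have hAdj : ∀ x y : α, ¬ (G.deleteEdges G.edges).Adj x y := by
    rintro x y ⟨e, he, -⟩
    simp [MG.deleteEdges] at he
  rcases Relation.ReflTransGen.cases_head (hcon a ha b hb) with heq | ⟨c, hac, -⟩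
  · exact hab heq
  · exact hAdj a c hac

end Aux

/-- If `G` is `k`-maximal then `κ'(G) = κ̄'(G) = k`. -/
theorem stmt5 {α β : Type} [DecidableEq α] [DecidableEq β] [Infinite β]
    (k : ℕ) (hk : 0 < k) (G : MG α β) (hn : 2 ≤ G.verts.card)
    (h : MG.IsKMaximal k G) :
    MG.kappa G = k ∧ MG.kappabar G = k := by
  obtain ⟨hbar, hmax⟩ := h
  have hbdd := mg_kappabar_bdd G
  have hGG : G.IsSubgraph G := ⟨subset_rfl, subset_rfl, fun _ _ => rfl⟩
  have hk1 : G.kappa ≤ G.kappabar := le_csSup hbdd ⟨G, hGG, rfl⟩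
  have hkk : k ≤ G.kappa := by
    by_contra hlt
    push_neg at hlt
    have hsne : {n | ∃ X ⊆ G.edges, X.card = n ∧ ¬ (G.deleteEdges X).Connected}.Nonempty :=
      ⟨G.edges.card, G.edges, subset_rfl, rfl, mg_del_all_not_connected G hn⟩
    obtain ⟨X, hXsub, hXcard, hXdis⟩ := Nat.sInf_mem hsne
    have hXk : X.card = G.kappa := hXcard
    have hvne : G.verts.Nonempty := Finset.card_pos.mp (by omega)
    rw [MG.Connected, not_and] at hXdis
    have hXdis' := hXdis hvne
    push_neg at hXdis'
    obtain ⟨a, ha, b, hb, hnr⟩ := hXdis'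
    have hab : a ≠ b := fun hab => hnr (hab ▸ Relation.ReflTransGen.refl)
    obtain ⟨e, he⟩ := Infinite.exists_notMem_finset G.edges
    have hadd := hmax e he a b ha hb hab
    set G' := G.addEdge e a b ha hb with hG'
    have hS'ne : {n | ∃ H : MG α β, H.IsSubgraph G' ∧ MG.kappa H = n}.Nonempty :=
      ⟨G'.kappa, G', ⟨subset_rfl, subset_rfl, fun _ _ => rfl⟩, rfl⟩
    obtain ⟨H, hHsub, hHk⟩ := Nat.sSup_mem hS'ne (mg_kappabar_bdd G')
    have hHge : k + 1 ≤ H.kappa := by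
      rw [hHk]; exact hadd
    by_cases hpos : e ∈ H.edges
    · have hendsG' : G'.ends e = s(a, b) := Function.update_self e _ _
      have hendsH : H.ends e = s(a, b) := (hHsub.2.2 e hpos).trans hendsG'
      have haH : a ∈ H.verts := H.wf e hpos a (by rw [hendsH]; exact Sym2.mem_mk_left a b)
      have hbH : b ∈ H.verts := H.wf e hpos b (by rw [hendsH]; exact Sym2.mem_mk_right a b)
      set X'' := (X ∪ {e}) ∩ H.edges with hX''
      have hHedges : ∀ f ∈ H.edges, f ≠ e → f ∈ G.edges := by
        intro f hf hfe
        have hfG' := hHsub.2.1 hf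
        rw [hG'] at hfG'
        simp only [MG.addEdge, Finset.mem_insert] at hfG'
        exact hfG'.resolve_left hfe
      have hsub2 : (H.deleteEdges X'').IsSubgraph (G.deleteEdges X) := by
        refine ⟨hHsub.1, ?_, ?_⟩
        · intro f hf
          simp only [MG.deleteEdges, Finset.mem_sdiff, hX'', Finset.mem_inter,
            Finset.mem_union, Finset.mem_singleton] at hf ⊢
          obtain ⟨hfH, hfn⟩ := hf
          have hfe : f ≠ e := fun hh => hfn ⟨Or.inr hh, hfH⟩
          have hfX : f ∉ X := fun hh => hfn ⟨Or.inl hh, hfH⟩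
          exact ⟨hHedges f hfH hfe, hfX⟩
        · intro f hf
          simp only [MG.deleteEdges, Finset.mem_sdiff, hX'', Finset.mem_inter,
            Finset.mem_union, Finset.mem_singleton] at hf
          obtain ⟨hfH, hfn⟩ := hf
          have hfe : f ≠ e := fun hh => hfn ⟨Or.inr hh, hfH⟩
          show H.ends f = G.ends f
          rw [hHsub.2.2 f hfH]
          exact Function.update_of_ne hfe _ _
      have hdis : ¬ (H.deleteEdges X'').Connected := by
        rintro ⟨-, hc⟩
        exact hnr (mg_reach_mono hsub2 (hc a haH b hbH))
      have hkle : H.kappa ≤ X''.card :=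
        Nat.sInf_le ⟨X'', Finset.inter_subset_right, rfl, hdis⟩
      have hcardle : X''.card ≤ X.card + 1 := by
        calc X''.card ≤ (X ∪ {e}).card := Finset.card_le_card Finset.inter_subset_left
        _ ≤ X.card + ({e} : Finset β).card := Finset.card_union_le _ _
        _ = X.card + 1 := by simp
      omega
    · have hsubG : H.IsSubgraph G := by
        refine ⟨hHsub.1, ?_, ?_⟩
        · intro f hf
          have hfe : f ≠ e := fun hh => hpos (by rwa [hh] at hf)
          have hfG' := hHsub.2.1 hf
          rw [hG'] at hfG'
          simp only [MG.addEdge, Finset.mem_insert] at hfG'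
          exact hfG'.resolve_left hfe
        · intro f hf
          rw [hHsub.2.2 f hf]
          exact Function.update_of_ne (fun hh => hpos (by rwa [hh] at hf)) _ _
      have : H.kappa ≤ G.kappabar := le_csSup hbdd ⟨H, hsubG, rfl⟩
      omega
  exact ⟨by omega, by omega⟩
end

section
/- If a multigraph G on at least 2 vertices is k-maximal, then G = G₁ *_k G₂, a k-edge-join where each Gᵢ is either a single vertex K₁ or itself a k-maximal graph. -/
open Finset

variable {α β : Type} [DecidableEq α] [DecidableEq β]

section Aux

open Finset

attribute [local instance] Classical.propDecidable

set_option linter.unusedSectionVars false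

namespace MG

variable {α β : Type} [DecidableEq α] [DecidableEq β]

lemma subgraph_refl (G : MG α β) : IsSubgraph G G :=
  ⟨Finset.Subset.refl _, Finset.Subset.refl _, fun _ _ => rfl⟩

lemma subgraph_trans {G₁ G₂ G₃ : MG α β} (h₁ : IsSubgraph G₁ G₂) (h₂ : IsSubgraph G₂ G₃) :
    IsSubgraph G₁ G₃ :=
  ⟨h₁.1.trans h₂.1, h₁.2.1.trans h₂.2.1,
    fun e he => (h₁.2.2 e he).trans (h₂.2.2 e (h₁.2.1 he))⟩

lemma reach_closed {G : MG α β} {W : Finset α}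
    (h : ∀ f ∈ G.edges, ∀ x y : α, G.ends f = s(x, y) → x ∈ W → y ∈ W)
    {x y : α} (hr : G.Reach x y) (hx : x ∈ W) : y ∈ W := by
  induction hr with
  | refl => exact hx
  | tail _ hadj ih =>
    obtain ⟨f, hf, hef⟩ := hadj
    exact h f hf _ _ hef ih

lemma kappa_le {G : MG α β} {Y : Finset β} (hY : Y ⊆ G.edges)
    (h : ¬ (G.deleteEdges Y).Connected) : kappa G ≤ Y.card :=
  Nat.sInf_le ⟨Y, hY, rfl, h⟩

lemma kappa_le_card (G : MG α β) : kappa G ≤ G.edges.card := by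
  by_cases hS : {n | ∃ X ⊆ G.edges, X.card = n ∧ ¬ (G.deleteEdges X).Connected}.Nonempty
  · obtain ⟨n, hn⟩ := hS
    obtain ⟨X, hX, hcard, hnc⟩ := hn
    calc kappa G ≤ n := Nat.sInf_le ⟨X, hX, hcard, hnc⟩
    _ = X.card := hcard.symm
    _ ≤ G.edges.card := Finset.card_le_card hX
  · unfold kappa
    rw [Set.not_nonempty_iff_eq_empty.mp hS, Nat.sInf_empty]
    exact Nat.zero_le _

lemma bddAbove_kappaSet (G : MG α β) :
    BddAbove {n | ∃ H : MG α β, IsSubgraph H G ∧ kappa H = n} := by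
  refine ⟨G.edges.card, ?_⟩
  rintro n ⟨H, hH, rfl⟩
  exact (kappa_le_card H).trans (Finset.card_le_card hH.2.1)

lemma kappa_le_kappabar {H G : MG α β} (h : IsSubgraph H G) : kappa H ≤ kappabar G :=
  le_csSup (bddAbove_kappaSet G) ⟨H, h, rfl⟩

lemma exists_sub_of_le_kappabar {G : MG α β} {m : ℕ} (h : m ≤ kappabar G) :
    ∃ H : MG α β, IsSubgraph H G ∧ m ≤ kappa H := by
  have hne : {n | ∃ H : MG α β, IsSubgraph H G ∧ kappa H = n}.Nonempty :=
    ⟨kappa G, G, subgraph_refl G, rfl⟩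
  obtain ⟨H, hH, hkH⟩ := Nat.sSup_mem hne (bddAbove_kappaSet G)
  exact ⟨H, hH, by rw [hkH]; exact h⟩

lemma kappabar_le {G : MG α β} {m : ℕ} (h : ∀ H : MG α β, IsSubgraph H G → kappa H ≤ m) :
    kappabar G ≤ m := by
  have hne : {n | ∃ H : MG α β, IsSubgraph H G ∧ kappa H = n}.Nonempty :=
    ⟨kappa G, G, subgraph_refl G, rfl⟩
  apply csSup_le hne
  rintro n ⟨H, hH, rfl⟩
  exact h H hH

lemma connected_congr {G₁ G₂ : MG α β} (hv : G₁.verts = G₂.verts)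
    (ha : ∀ x y : α, G₁.Adj x y ↔ G₂.Adj x y) : G₁.Connected ↔ G₂.Connected := by
  have hr : ∀ x y : α, G₁.Reach x y ↔ G₂.Reach x y := fun x y =>
    ⟨Relation.ReflTransGen.mono (fun a b hab => (ha a b).mp hab) x y,
     Relation.ReflTransGen.mono (fun a b hab => (ha a b).mpr hab) x y⟩
  constructor
  · rintro ⟨hne, hall⟩
    exact ⟨hv ▸ hne, fun a haa b hbb => (hr a b).mp (hall a (hv ▸ haa) b (hv ▸ hbb))⟩
  · rintro ⟨hne, hall⟩
    exact ⟨hv ▸ hne, fun a haa b hbb => (hr a b).mpr (hall a (hv ▸ haa) b (hv ▸ hbb))⟩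

/-- Relabel the edges of a multigraph via a permutation of edge names. -/
def mapEdges (σ : β ≃ β) (G : MG α β) : MG α β where
  verts := G.verts
  edges := G.edges.image σ
  ends := G.ends ∘ σ.symm
  wf := by
    intro f hf v hv
    obtain ⟨g, hg, rfl⟩ := Finset.mem_image.mp hf
    refine G.wf g hg v ?_
    simpa using hv

lemma adj_mapEdges_delete (σ : β ≃ β) (G : MG α β) (X : Finset β) (x y : α) :
    ((mapEdges σ G).deleteEdges (X.image σ)).Adj x y ↔ (G.deleteEdges X).Adj x y := by
  constructor
  · rintro ⟨f, hf, he⟩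
    rw [deleteEdges, Finset.mem_sdiff] at hf
    obtain ⟨g, hg, rfl⟩ := Finset.mem_image.mp hf.1
    refine ⟨g, Finset.mem_sdiff.mpr ⟨hg, fun hgX => hf.2 (Finset.mem_image_of_mem _ hgX)⟩, ?_⟩
    simpa [mapEdges, deleteEdges] using he
  · rintro ⟨g, hg, he⟩
    rw [deleteEdges, Finset.mem_sdiff] at hg
    refine ⟨σ g, Finset.mem_sdiff.mpr ⟨Finset.mem_image_of_mem _ hg.1, ?_⟩, ?_⟩
    · intro hmem
      obtain ⟨x', hx', hxeq⟩ := Finset.mem_image.mp hmem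
      exact hg.2 (σ.injective hxeq ▸ hx')
    · simpa [mapEdges, deleteEdges] using he

lemma kappa_mapEdges (σ : β ≃ β) (G : MG α β) : kappa (mapEdges σ G) = kappa G := by
  unfold kappa
  congr 1
  ext n
  constructor
  · rintro ⟨X, hX, rfl, hnc⟩
    refine ⟨X.image σ.symm, ?_, ?_, ?_⟩
    · intro x hx
      obtain ⟨f, hf, rfl⟩ := Finset.mem_image.mp hx
      obtain ⟨g, hg, rfl⟩ := Finset.mem_image.mp (hX hf)
      simpa using hg
    · rw [Finset.card_image_of_injective _ σ.symm.injective]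
    · intro hc
      apply hnc
      have himg : (X.image σ.symm).image σ = X := by
        rw [Finset.image_image]
        simp
      have := (connected_congr (G₁ := (mapEdges σ G).deleteEdges ((X.image σ.symm).image σ))
        (G₂ := G.deleteEdges (X.image σ.symm)) rfl
        (adj_mapEdges_delete σ G (X.image σ.symm))).mpr hc
      rwa [himg] at this
  · rintro ⟨X, hX, rfl, hnc⟩
    refine ⟨X.image σ, Finset.image_subset_image hX, ?_, ?_⟩
    · rw [Finset.card_image_of_injective _ σ.injective]
    · intro hc
      exact hnc ((connected_congr (G₁ := (mapEdges σ G).deleteEdges (X.image σ))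
        (G₂ := G.deleteEdges X) rfl (adj_mapEdges_delete σ G X)).mp hc)

/-- Induced subgraph on a vertex set. -/
noncomputable def induce (G : MG α β) (W : Finset α) : MG α β where
  verts := W
  edges := G.edges.filter (fun f => ∀ v ∈ G.ends f, v ∈ W)
  ends := G.ends
  wf := fun f hf v hv => (Finset.mem_filter.mp hf).2 v hv

lemma induce_subgraph (G : MG α β) {W : Finset α} (hW : W ⊆ G.verts) :
    IsSubgraph (G.induce W) G :=
  ⟨hW, Finset.filter_subset _ _, fun _ _ => rfl⟩

end MG

end Aux

namespace MG

variable {α β : Type} [DecidableEq α] [DecidableEq β]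

attribute [local instance] Classical.propDecidable

set_option linter.unusedSectionVars false

lemma sym2_rep (z : Sym2 α) : ∃ p q : α, z = s(p, q) :=
  Sym2.ind (fun p q => ⟨p, q, rfl⟩) z

lemma side {k : ℕ} {G : MG α β} [Infinite β] (h : IsKMaximal k G)
    {W₁ W₂ : Finset α} (hdisj : Disjoint W₁ W₂) (hun : G.verts = W₁ ∪ W₂)
    {Kc : Finset β} (hKcard : Kc.card ≤ k)
    (hcross : ∀ f ∈ G.edges, (f ∈ Kc ↔ ∃ u ∈ W₁, ∃ v ∈ W₂, G.ends f = s(u, v))) :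
    IsKMaximal k (G.induce W₁) := by
  have hW₁sub : W₁ ⊆ G.verts := hun ▸ Finset.subset_union_left
  constructor
  · exact kappabar_le fun H hH =>
      (kappa_le_kappabar (subgraph_trans hH (induce_subgraph G hW₁sub))).trans h.1
  · intro e he a b ha hb hab
    have haW : a ∈ W₁ := ha
    have hbW : b ∈ W₁ := hb
    obtain ⟨e', he'⟩ := Infinite.exists_notMem_finset (insert e G.edges)
    have he'G : e' ∉ G.edges := fun hc => he' (Finset.mem_insert_of_mem hc)
    have h2 := h.2 e' he'G a b (hW₁sub haW) (hW₁sub hbW) hab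
    obtain ⟨H, hHsub, hHk⟩ := exists_sub_of_le_kappabar h2
    have hHverts : H.verts ⊆ G.verts := hHsub.1
    have hHedges : H.edges ⊆ insert e' G.edges := hHsub.2.1
    have hHends : ∀ f ∈ H.edges,
        H.ends f = (G.addEdge e' a b (hW₁sub haW) (hW₁sub hbW)).ends f := hHsub.2.2
    have hendse' : (G.addEdge e' a b (hW₁sub haW) (hW₁sub hbW)).ends e' = s(a, b) :=
      Function.update_self _ _ _
    have hendsne : ∀ f, f ≠ e' →
        (G.addEdge e' a b (hW₁sub haW) (hW₁sub hbW)).ends f = G.ends f :=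
      fun f hf => Function.update_of_ne hf _ _
    have hdis : ∀ x ∈ H.verts, x ∈ W₁ → ∀ y ∈ H.verts, y ∈ W₂ → False := by
      intro x hx hxW y hy hyW
      have hYsub : H.edges ∩ Kc ⊆ H.edges := Finset.inter_subset_left
      have hnc : ¬ (H.deleteEdges (H.edges ∩ Kc)).Connected := by
        rintro ⟨-, hall⟩
        have hreach := hall x hx y hy
        have hinv : ∀ f ∈ (H.deleteEdges (H.edges ∩ Kc)).edges, ∀ p q : α,
            (H.deleteEdges (H.edges ∩ Kc)).ends f = s(p, q) → p ∈ W₁ → q ∈ W₁ := by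
          intro f hf p q hends hp
          have hends' : H.ends f = s(p, q) := hends
          obtain ⟨hfH, hfY⟩ := Finset.mem_sdiff.mp hf
          have hfK : f ∉ Kc := fun hc => hfY (Finset.mem_inter.mpr ⟨hfH, hc⟩)
          by_cases hfe : f = e'
          · subst hfe
            have hab2 : (s(a, b) : Sym2 α) = s(p, q) := by
              rw [← hendse', ← hHends f hfH]; exact hends'
            have hq : q ∈ s(a, b) := hab2 ▸ Sym2.mem_mk_right p q
            rcases Sym2.mem_iff.mp hq with rfl | rfl
            · exact haW
            · exact hbW
          · have hfG : f ∈ G.edges := (Finset.mem_insert.mp (hHedges hfH)).resolve_left hfe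
            have hGends : G.ends f = s(p, q) := by
              rw [← hendsne f hfe, ← hHends f hfH]; exact hends'
            have hq : q ∈ G.verts := G.wf f hfG q (hGends ▸ Sym2.mem_mk_right p q)
            rcases Finset.mem_union.mp (hun ▸ hq) with h1 | h2
            · exact h1
            · exact absurd ((hcross f hfG).mpr ⟨p, hp, q, h2, hGends⟩) hfK
        exact Finset.disjoint_left.mp hdisj (reach_closed hinv hreach hxW) hyW
      have h3 := kappa_le hYsub hnc
      have h4 : (H.edges ∩ Kc).card ≤ k :=
        (Finset.card_le_card Finset.inter_subset_right).trans hKcard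
      omega
    have hside : H.verts ⊆ W₁ ∨ H.verts ⊆ W₂ := by
      by_cases h1 : ∀ x ∈ H.verts, x ∈ W₁
      · exact Or.inl h1
      · push_neg at h1
        obtain ⟨y, hy, hy1⟩ := h1
        have hy2 : y ∈ W₂ := (Finset.mem_union.mp (hun ▸ hHverts hy)).resolve_left hy1
        refine Or.inr fun x hx => ?_
        rcases Finset.mem_union.mp (hun ▸ hHverts hx) with h1' | h2'
        · exact (hdis x hx h1' y hy hy2).elim
        · exact h2'
    have hHinG : e' ∉ H.edges → False := by
      intro he'H
      have hsubG : IsSubgraph H G :=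
        ⟨hHverts,
         fun f hf => (Finset.mem_insert.mp (hHedges hf)).resolve_left
           (fun hc => he'H (hc ▸ hf)),
         fun f hf => (hHends f hf).trans (hendsne f (fun hc => he'H (hc ▸ hf)))⟩
      have := (kappa_le_kappabar hsubG).trans h.1
      omega
    rcases hside with hs1 | hs2
    · by_cases he'H : e' ∈ H.edges
      · have hedgeW : ∀ f ∈ H.edges, f ≠ e' → f ∈ (G.induce W₁).edges := by
          intro f hf hfe
          have hfG : f ∈ G.edges := (Finset.mem_insert.mp (hHedges hf)).resolve_left hfe
          refine Finset.mem_filter.mpr ⟨hfG, ?_⟩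
          intro w hw
          refine hs1 (H.wf f hf w ?_)
          rw [hHends f hf, hendsne f hfe]
          exact hw
        have heE : e ∉ (G.induce W₁).edges := he
        have hsub2 : IsSubgraph (mapEdges (Equiv.swap e' e) H)
            ((G.induce W₁).addEdge e a b ha hb) := by
          refine ⟨hs1, ?_, ?_⟩
          · intro f hf
            obtain ⟨g, hg, rfl⟩ := Finset.mem_image.mp hf
            show Equiv.swap e' e g ∈ insert e (G.induce W₁).edges
            by_cases hge : g = e'
            · subst hge
              rw [Equiv.swap_apply_left]
              exact Finset.mem_insert_self _ _
            · have hgE : g ∈ (G.induce W₁).edges := hedgeW g hg hge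
              have hgne : g ≠ e := fun hc => heE (hc ▸ hgE)
              rw [Equiv.swap_apply_of_ne_of_ne hge hgne]
              exact Finset.mem_insert_of_mem hgE
          · intro f hf
            obtain ⟨g, hg, rfl⟩ := Finset.mem_image.mp hf
            show (H.ends ∘ (Equiv.swap e' e).symm) (Equiv.swap e' e g)
              = Function.update (G.induce W₁).ends e s(a, b) (Equiv.swap e' e g)
            rw [Function.comp_apply, Equiv.symm_apply_apply]
            by_cases hge : g = e'
            · subst hge
              rw [Equiv.swap_apply_left, Function.update_self, hHends _ hg, hendse']
            · have hgE : g ∈ (G.induce W₁).edges := hedgeW g hg hge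
              have hgne : g ≠ e := fun hc => heE (hc ▸ hgE)
              rw [Equiv.swap_apply_of_ne_of_ne hge hgne, Function.update_of_ne hgne,
                hHends g hg, hendsne g hge]
              rfl
        calc k + 1 ≤ kappa H := hHk
          _ = kappa (mapEdges (Equiv.swap e' e) H) := (kappa_mapEdges _ H).symm
          _ ≤ kappabar ((G.induce W₁).addEdge e a b ha hb) := kappa_le_kappabar hsub2
      · exact (hHinG he'H).elim
    · by_cases he'H : e' ∈ H.edges
      · exfalso
        have haH : a ∈ H.verts := H.wf e' he'H a (by
          rw [hHends e' he'H, hendse']; exact Sym2.mem_mk_left a b)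
        exact Finset.disjoint_left.mp hdisj haW (hs2 haH)
      · exact (hHinG he'H).elim

end MG

/-- Every `k`-maximal multigraph on at least two vertices is a `k`-edge-join
`G₁ *_k G₂` where each `Gᵢ` is `K₁` or `k`-maximal. -/
theorem stmt6 {α β : Type} [DecidableEq α] [DecidableEq β] [Infinite β]
    (k : ℕ) (hk : 0 < k) (G : MG α β) (hn : 2 ≤ G.verts.card)
    (h : MG.IsKMaximal k G) :
    ∃ G₁ G₂ : MG α β, MG.IsEdgeJoin G G₁ G₂ k ∧
      (MG.IsK1 G₁ ∨ MG.IsKMaximal k G₁) ∧ (MG.IsK1 G₂ ∨ MG.IsKMaximal k G₂) := by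
  classical
  obtain ⟨u, hu, v, hv, huv⟩ := Finset.one_lt_card.mp (by omega : 1 < G.verts.card)
  have hkG : MG.kappa G ≤ k := (MG.kappa_le_kappabar (MG.subgraph_refl G)).trans h.1
  have hncall : ¬ (G.deleteEdges G.edges).Connected := by
    rintro ⟨-, hall⟩
    have hreach := hall u hu v hv
    have hvu : v ∈ ({u} : Finset α) :=
      MG.reach_closed (G := G.deleteEdges G.edges) (W := {u})
        (by intro f hf; simp [MG.deleteEdges] at hf) hreach (Finset.mem_singleton_self u)
    exact huv (Finset.mem_singleton.mp hvu).symm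
  have hSne : {n | ∃ X ⊆ G.edges, X.card = n ∧ ¬ (G.deleteEdges X).Connected}.Nonempty :=
    ⟨G.edges.card, G.edges, Finset.Subset.refl _, rfl, hncall⟩
  obtain ⟨X, hXsub, hXcard, hXnc⟩ := Nat.sInf_mem hSne
  have hXk : X.card ≤ k := by rw [hXcard]; exact hkG
  have hex : ∃ a ∈ G.verts, ∃ b ∈ G.verts, ¬ (G.deleteEdges X).Reach a b := by
    by_contra hcon
    push_neg at hcon
    exact hXnc ⟨⟨u, hu⟩, hcon⟩
  obtain ⟨a, ha, b, hb, hnr⟩ := hex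
  set W₁ := G.verts.filter (fun w => (G.deleteEdges X).Reach a w) with hW₁
  set W₂ := G.verts \ W₁ with hW₂
  have haW : a ∈ W₁ := Finset.mem_filter.mpr ⟨ha, Relation.ReflTransGen.refl⟩
  have hbW : b ∈ W₂ := Finset.mem_sdiff.mpr ⟨hb, fun hm => hnr (Finset.mem_filter.mp hm).2⟩
  have hdisj : Disjoint W₁ W₂ := Finset.disjoint_sdiff
  have hun : G.verts = W₁ ∪ W₂ := by
    ext w
    constructor
    · intro hw
      by_cases hw1 : w ∈ W₁
      · exact Finset.mem_union_left _ hw1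
      · exact Finset.mem_union_right _ (Finset.mem_sdiff.mpr ⟨hw, hw1⟩)
    · intro hw
      rcases Finset.mem_union.mp hw with h1 | h1
      · exact Finset.filter_subset _ _ h1
      · exact (Finset.mem_sdiff.mp h1).1
  set Kc := G.edges.filter (fun f => ∃ u' ∈ W₁, ∃ v' ∈ W₂, G.ends f = s(u', v')) with hKc
  have hcross : ∀ f ∈ G.edges, (f ∈ Kc ↔ ∃ u' ∈ W₁, ∃ v' ∈ W₂, G.ends f = s(u', v')) := by
    intro f hf
    rw [hKc, Finset.mem_filter]
    exact ⟨fun hx => hx.2, fun hx => ⟨hf, hx⟩⟩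
  have hKX : Kc ⊆ X := by
    intro f hf
    obtain ⟨hfG, u', hu', v', hv', hends⟩ := Finset.mem_filter.mp hf
    by_contra hfX
    have hadj : (G.deleteEdges X).Adj u' v' := ⟨f, Finset.mem_sdiff.mpr ⟨hfG, hfX⟩, hends⟩
    have hru : (G.deleteEdges X).Reach a u' := (Finset.mem_filter.mp hu').2
    have hrv : (G.deleteEdges X).Reach a v' := hru.trans (Relation.ReflTransGen.single hadj)
    exact (Finset.mem_sdiff.mp hv').2
      (Finset.mem_filter.mpr ⟨(Finset.mem_sdiff.mp hv').1, hrv⟩)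
  have hKcard : Kc.card ≤ k := (Finset.card_le_card hKX).trans hXk
  have hab : a ≠ b := fun hc => Finset.disjoint_left.mp hdisj haW (hc ▸ hbW)
  have hKeq : Kc.card = k := by
    by_contra hne
    have hlt : Kc.card < k := lt_of_le_of_ne hKcard hne
    obtain ⟨e, he⟩ := Infinite.exists_notMem_finset G.edges
    have h2 := h.2 e he a b ha hb hab
    obtain ⟨H, hHsub, hHk⟩ := MG.exists_sub_of_le_kappabar h2
    have hHverts : H.verts ⊆ G.verts := hHsub.1
    have hHedges : H.edges ⊆ insert e G.edges := hHsub.2.1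
    have hHends : ∀ f ∈ H.edges, H.ends f = (G.addEdge e a b ha hb).ends f := hHsub.2.2
    have hendse : (G.addEdge e a b ha hb).ends e = s(a, b) := Function.update_self _ _ _
    have hendsne : ∀ f, f ≠ e → (G.addEdge e a b ha hb).ends f = G.ends f :=
      fun f hf => Function.update_of_ne hf _ _
    have hdis : ∀ x ∈ H.verts, x ∈ W₁ → ∀ y ∈ H.verts, y ∈ W₂ → False := by
      intro x hx hxW y hy hyW
      have hYsub : H.edges ∩ insert e Kc ⊆ H.edges := Finset.inter_subset_left
      have hnc : ¬ (H.deleteEdges (H.edges ∩ insert e Kc)).Connected := by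
        rintro ⟨-, hall⟩
        have hreach := hall x hx y hy
        have hinv : ∀ f ∈ (H.deleteEdges (H.edges ∩ insert e Kc)).edges, ∀ p q : α,
            (H.deleteEdges (H.edges ∩ insert e Kc)).ends f = s(p, q) → p ∈ W₁ → q ∈ W₁ := by
          intro f hf p q hends hp
          have hends' : H.ends f = s(p, q) := hends
          obtain ⟨hfH, hfY⟩ := Finset.mem_sdiff.mp hf
          have hfe : f ≠ e := fun hc =>
            hfY (Finset.mem_inter.mpr ⟨hfH, hc ▸ Finset.mem_insert_self e Kc⟩)
          have hfK : f ∉ Kc := fun hc =>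
            hfY (Finset.mem_inter.mpr ⟨hfH, Finset.mem_insert_of_mem hc⟩)
          have hfG : f ∈ G.edges := (Finset.mem_insert.mp (hHedges hfH)).resolve_left hfe
          have hGends : G.ends f = s(p, q) := by
            rw [← hendsne f hfe, ← hHends f hfH]; exact hends'
          have hq : q ∈ G.verts := G.wf f hfG q (hGends ▸ Sym2.mem_mk_right p q)
          rcases Finset.mem_union.mp (hun ▸ hq) with h1 | h2
          · exact h1
          · exact absurd ((hcross f hfG).mpr ⟨p, hp, q, h2, hGends⟩) hfK
        exact Finset.disjoint_left.mp hdisj (MG.reach_closed hinv hreach hxW) hyW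
      have h3 := MG.kappa_le hYsub hnc
      have h4 : (H.edges ∩ insert e Kc).card ≤ Kc.card + 1 :=
        (Finset.card_le_card Finset.inter_subset_right).trans (Finset.card_insert_le e Kc)
      omega
    have hside : H.verts ⊆ W₁ ∨ H.verts ⊆ W₂ := by
      by_cases h1 : ∀ x ∈ H.verts, x ∈ W₁
      · exact Or.inl h1
      · push_neg at h1
        obtain ⟨y, hy, hy1⟩ := h1
        have hy2 : y ∈ W₂ := (Finset.mem_union.mp (hun ▸ hHverts hy)).resolve_left hy1
        refine Or.inr fun x hx => ?_
        rcases Finset.mem_union.mp (hun ▸ hHverts hx) with h1' | h2'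
        · exact (hdis x hx h1' y hy hy2).elim
        · exact h2'
    have heH : e ∉ H.edges := by
      intro heHe
      have haH : a ∈ H.verts := H.wf e heHe a (by
        rw [hHends e heHe, hendse]; exact Sym2.mem_mk_left a b)
      have hbH : b ∈ H.verts := H.wf e heHe b (by
        rw [hHends e heHe, hendse]; exact Sym2.mem_mk_right a b)
      rcases hside with hs | hs
      · exact Finset.disjoint_left.mp hdisj (hs hbH) hbW
      · exact Finset.disjoint_left.mp hdisj haW (hs haH)
    have hsubG : MG.IsSubgraph H G :=
      ⟨hHverts,
       fun f hf => (Finset.mem_insert.mp (hHedges hf)).resolve_left (fun hc => heH (hc ▸ hf)),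
       fun f hf => (hHends f hf).trans (hendsne f (fun hc => heH (hc ▸ hf)))⟩
    have := (MG.kappa_le_kappabar hsubG).trans h.1
    omega
  have hW₁sub : W₁ ⊆ G.verts := Finset.filter_subset _ _
  have hW₂sub : W₂ ⊆ G.verts := Finset.sdiff_subset
  refine ⟨G.induce W₁, G.induce W₂, ?_, Or.inr (MG.side h hdisj hun hKeq.le hcross), Or.inr ?_⟩
  · refine ⟨hdisj, MG.induce_subgraph G hW₁sub, MG.induce_subgraph G hW₂sub, hun,
      Kc, hKeq, ?_, ?_, ?_⟩
    · rw [Finset.disjoint_left]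
      intro f hf hfE
      obtain ⟨hfG, u', hu', v', hv', hends⟩ := Finset.mem_filter.mp hf
      rcases Finset.mem_union.mp hfE with h1 | h1
      · have hv'W : v' ∈ W₁ := (Finset.mem_filter.mp h1).2 v' (hends ▸ Sym2.mem_mk_right u' v')
        exact Finset.disjoint_left.mp hdisj hv'W hv'
      · have hu'W : u' ∈ W₂ := (Finset.mem_filter.mp h1).2 u' (hends ▸ Sym2.mem_mk_left u' v')
        exact Finset.disjoint_left.mp hdisj hu' hu'W
    · apply Finset.Subset.antisymm
      · intro f hf
        obtain ⟨p, q, hpq⟩ := MG.sym2_rep (G.ends f)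
        have hp : p ∈ G.verts := G.wf f hf p (hpq ▸ Sym2.mem_mk_left p q)
        have hq : q ∈ G.verts := G.wf f hf q (hpq ▸ Sym2.mem_mk_right p q)
        have hmem : ∀ w, w ∈ G.ends f → w = p ∨ w = q := fun w hw =>
          Sym2.mem_iff.mp (hpq ▸ hw)
        rcases Finset.mem_union.mp (hun ▸ hp) with hp1 | hp2 <;>
          rcases Finset.mem_union.mp (hun ▸ hq) with hq1 | hq2
        · refine Finset.mem_union_left _ (Finset.mem_union_left _ (Finset.mem_filter.mpr
            ⟨hf, fun w hw => ?_⟩))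
          rcases hmem w hw with rfl | rfl
          · exact hp1
          · exact hq1
        · exact Finset.mem_union_right _ ((hcross f hf).mpr ⟨p, hp1, q, hq2, hpq⟩)
        · exact Finset.mem_union_right _ ((hcross f hf).mpr
            ⟨q, hq1, p, hp2, by rw [hpq]; exact Sym2.eq_swap⟩)
        · refine Finset.mem_union_left _ (Finset.mem_union_right _ (Finset.mem_filter.mpr
            ⟨hf, fun w hw => ?_⟩))
          rcases hmem w hw with rfl | rfl
          · exact hp2
          · exact hq2
      · intro f hf
        rcases Finset.mem_union.mp hf with h1 | h1
        · rcases Finset.mem_union.mp h1 with h2 | h2 <;> exact (Finset.mem_filter.mp h2).1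
        · exact (Finset.mem_filter.mp h1).1
    · intro f hfK
      exact (Finset.mem_filter.mp hfK).2
  · apply MG.side h hdisj.symm (by rw [hun, Finset.union_comm]) hKeq.le
    intro f hf
    rw [hcross f hf]
    constructor
    · rintro ⟨u', hu', v', hv', hends⟩
      exact ⟨v', hv', u', hu', by rw [hends]; exact Sym2.eq_swap⟩
    · rintro ⟨u', hu', v', hv', hends⟩
      exact ⟨v', hv', u', hu', by rw [hends]; exact Sym2.eq_swap⟩
end
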